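/- arXiv:2111.08200 — 7 statements merged into one kernel-verified Lean document; each statement's English description precedes it below -/
import Mathlib

section
/- For every continuously differentiable function g on [0,1] (with values in ℝ or ℂ), one has ∫₀¹ |g(r)|² r dr ≤ ∫₀¹ |(d/dr)(r g(r))|² (1/r) dr. -/
open MeasureTheory Set
open scoped ENNReal

/-!
Put `h r = r g r`. Since `h 0 = 0`, `h r = ∫₀ʳ h'`, and Cauchy–Schwarz with the weight `s` gives
`r² |g r|² = |h r|² ≤ (∫₀ʳ s ds) (∫₀ʳ |h' s|² / s ds) = (r² / 2) ∫₀ʳ |h' s|² / s ds`.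
So `|g r|²` is bounded by half the right-hand side at every point of `(0, 1]`; as `r ≤ 1` and
`(0, 1)` has measure one, integrating `|g r|² r` over `(0, 1)` proves the inequality.
-/

theorem lintegral_sq_le_lintegral_mul_lintegral_sq_div {α : Type*} [MeasurableSpace α]
    {μ : Measure α} {F w : α → ℝ≥0∞}
    (hF : AEMeasurable F μ) (hw : AEMeasurable w μ) (hw0 : ∀ᵐ a ∂μ, w a ≠ 0)
    (hw_top : ∀ᵐ a ∂μ, w a ≠ ∞) :
    (∫⁻ a, F a ∂μ) ^ 2 ≤ (∫⁻ a, w a ∂μ) * ∫⁻ a, F a ^ 2 / w a ∂μ := by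
  have hfactor : ∀ᵐ a ∂μ, F a = w a ^ (2⁻¹ : ℝ) * (F a ^ 2 / w a) ^ (2⁻¹ : ℝ) := by
    filter_upwards [hw0, hw_top] with a h0 htop
    rw [← ENNReal.mul_rpow_of_nonneg _ _ (by norm_num), ENNReal.mul_div_cancel h0 htop,
      ← ENNReal.rpow_natCast, ← ENNReal.rpow_mul]
    norm_num
  have holder := ENNReal.lintegral_mul_norm_pow_le hw ((hF.pow_const 2).div hw)
    (by norm_num : (0 : ℝ) ≤ 2⁻¹) (by norm_num : (0 : ℝ) ≤ 2⁻¹) (by norm_num)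
  calc (∫⁻ a, F a ∂μ) ^ 2
      ≤ ((∫⁻ a, w a ∂μ) ^ (2⁻¹ : ℝ) * (∫⁻ a, F a ^ 2 / w a ∂μ) ^ (2⁻¹ : ℝ)) ^ 2 := by
        rw [lintegral_congr_ae hfactor]
        gcongr
        exact holder
    _ = (∫⁻ a, w a ∂μ) * ∫⁻ a, F a ^ 2 / w a ∂μ := by
        rw [← ENNReal.mul_rpow_of_nonneg _ _ (by norm_num), ← ENNReal.rpow_natCast,
          ← ENNReal.rpow_mul]
        norm_num

theorem setLIntegral_Ioo_zero_ofReal_self {x : ℝ} (hx : 0 ≤ x) :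
    ∫⁻ s in Ioo 0 x, ENNReal.ofReal s = ENNReal.ofReal (x ^ 2 / 2) := by
  rw [← ofReal_integral_eq_lintegral_ofReal, ← integral_Ioc_eq_integral_Ioo,
    ← intervalIntegral.integral_of_le hx, integral_id]
  · ring_nf
  · exact continuous_id.integrableOn_Icc.mono_set Ioo_subset_Icc_self
  · exact ae_restrict_of_forall_mem measurableSet_Ioo fun s hs => hs.1.le

section

variable {E : Type*} [NormedAddCommGroup E] [NormedSpace ℝ E] [CompleteSpace E]

theorem enorm_sq_le_mul_lintegral_enorm_deriv_sq_div {h : ℝ → E} {x : ℝ} (hx : 0 ≤ x)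
    (hh : ContDiffOn ℝ 1 h (Icc 0 x)) (h0 : h 0 = 0) :
    ‖h x‖ₑ ^ 2 ≤ ENNReal.ofReal (x ^ 2 / 2) *
      ∫⁻ s in Ioo 0 x, ‖deriv h s‖ₑ ^ 2 / ENNReal.ofReal s := by
  have hftc : ‖h x‖ₑ ≤ ∫⁻ s in Ioo 0 x, ‖deriv h s‖ₑ := by
    simpa [h0, restrict_Ioo_eq_restrict_Icc] using
      enorm_sub_le_lintegral_deriv_of_contDiffOn_Icc hh hx
  have hpos : ∀ᵐ s ∂volume.restrict (Ioo 0 x), 0 < s :=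
    ae_restrict_of_forall_mem measurableSet_Ioo fun s hs => hs.1
  calc ‖h x‖ₑ ^ 2 ≤ (∫⁻ s in Ioo 0 x, ‖deriv h s‖ₑ) ^ 2 := by gcongr
    _ ≤ (∫⁻ s in Ioo 0 x, ENNReal.ofReal s) *
          ∫⁻ s in Ioo 0 x, ‖deriv h s‖ₑ ^ 2 / ENNReal.ofReal s :=
        lintegral_sq_le_lintegral_mul_lintegral_sq_div
          (stronglyMeasurable_deriv h).aestronglyMeasurable.enorm
          measurable_id.ennreal_ofReal.aemeasurable
          (hpos.mono fun s hs => ENNReal.ofReal_pos.2 hs |>.ne')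
          (Filter.Eventually.of_forall fun _ => ENNReal.ofReal_ne_top)
    _ = _ := by rw [setLIntegral_Ioo_zero_ofReal_self hx]

theorem enorm_sq_le_half_lintegral_enorm_deriv_smul_sq_div {g : ℝ → E} {x : ℝ} (hx : 0 < x)
    (hg : ContDiffOn ℝ 1 g (Icc 0 x)) :
    ‖g x‖ₑ ^ 2 ≤ 2⁻¹ * ∫⁻ s in Ioo 0 x, ‖deriv (fun s => s • g s) s‖ₑ ^ 2 / ENNReal.ofReal s := by
  have hbound := enorm_sq_le_mul_lintegral_enorm_deriv_sq_div hx.le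
    (h := fun s => s • g s) (contDiffOn_id.smul hg) (zero_smul ℝ (g 0))
  have hx2 : ENNReal.ofReal (x ^ 2 / 2) = ENNReal.ofReal (x ^ 2) * 2⁻¹ := by
    rw [ENNReal.ofReal_div_of_pos two_pos, div_eq_mul_inv, ENNReal.ofReal_ofNat]
  rw [enorm_smul, mul_pow, hx2, mul_assoc, Real.enorm_eq_ofReal hx.le,
    ← ENNReal.ofReal_pow hx.le] at hbound
  exact (ENNReal.mul_le_mul_iff_right (by positivity) ENNReal.ofReal_ne_top).1 hbound

end

/-- Poincaré type inequality: for a C¹ function `g` on `[0,1]`,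
`∫₀¹ |g(r)|² r dr ≤ ∫₀¹ |(d/dr)(r g(r))|² (1/r) dr`. -/
theorem stmt0 (g : ℝ → ℂ) (hg : ContDiffOn ℝ 1 g (Icc (0:ℝ) 1)) :
    (∫⁻ r in Ioo (0:ℝ) 1, ENNReal.ofReal (‖g r‖ ^ 2 * r)) ≤
      ∫⁻ r in Ioo (0:ℝ) 1,
        ENNReal.ofReal (‖derivWithin (fun s : ℝ => (s : ℂ) * g s) (Icc (0:ℝ) 1) r‖ ^ 2 / r) := by
  set C := ∫⁻ r in Ioo (0:ℝ) 1,
    ENNReal.ofReal (‖derivWithin (fun s : ℝ => (s : ℂ) * g s) (Icc (0:ℝ) 1) r‖ ^ 2 / r)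
  have hC : ∫⁻ s in Ioo 0 1, ‖deriv (fun s : ℝ => s • g s) s‖ₑ ^ 2 / ENNReal.ofReal s = C := by
    refine setLIntegral_congr_fun measurableSet_Ioo fun s hs => ?_
    simp only [Complex.real_smul, derivWithin_of_mem_nhds (Icc_mem_nhds hs.1 hs.2)]
    rw [ENNReal.ofReal_div_of_pos hs.1, ENNReal.ofReal_pow (norm_nonneg _), ofReal_norm]
  have hpointwise : ∀ r ∈ Ioo (0:ℝ) 1, ENNReal.ofReal (‖g r‖ ^ 2 * r) ≤ C := by
    intro r hr
    calc ENNReal.ofReal (‖g r‖ ^ 2 * r) ≤ ENNReal.ofReal (‖g r‖ ^ 2) :=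
          ENNReal.ofReal_le_ofReal (mul_le_of_le_one_right (by positivity) hr.2.le)
      _ = ‖g r‖ₑ ^ 2 := by rw [ENNReal.ofReal_pow (norm_nonneg _), ofReal_norm]
      _ ≤ 2⁻¹ * ∫⁻ s in Ioo 0 r, ‖deriv (fun s : ℝ => s • g s) s‖ₑ ^ 2 / ENNReal.ofReal s :=
          enorm_sq_le_half_lintegral_enorm_deriv_smul_sq_div hr.1
            (hg.mono (Icc_subset_Icc le_rfl hr.2.le))
      _ ≤ ∫⁻ s in Ioo 0 1, ‖deriv (fun s : ℝ => s • g s) s‖ₑ ^ 2 / ENNReal.ofReal s :=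
          mul_le_of_le_one_of_le (by norm_num)
            (lintegral_mono_set (Ioo_subset_Ioo le_rfl hr.2.le))
      _ = C := hC
  calc (∫⁻ r in Ioo (0:ℝ) 1, ENNReal.ofReal (‖g r‖ ^ 2 * r))
      ≤ ∫⁻ _ in Ioo (0:ℝ) 1, C := setLIntegral_mono measurable_const hpointwise
    _ = C := by simp [Real.volume_Ioo]
end

section
/- Let g be a C² function on [0,1] with g(0) = g(1) = 0, and let L g = g'' + g'/r − g/r². Then ∫₀¹ |(d/dr)(r g)|² (1/r) dr ≤ (∫₀¹ |L g|² r dr)^{1/2} (∫₀¹ |g|² r dr)^{1/2}. -/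
/-!
Write `v = (r g)' = g + r g'`. A direct computation gives
`(Re (v ḡ))' = Re (L g · ḡ) r + |v|² / r` on `(0,1)`, and `Re (v ḡ)` vanishes at both endpoints,
so `∫ |v|² / r = -∫ Re (L g · ḡ) r ≤ ∫ |L g| |g| r`; Cauchy–Schwarz with weight `r` finishes.
Both integrands are bounded, hence integrable, because `g(0) = 0` forces `|g(r)| ≤ C r`.
-/

open MeasureTheory Set ComplexConjugate

noncomputable def radialOp (g g' g'' : ℝ → ℂ) (r : ℝ) : ℂ := g'' r + g' r / r - g r / r ^ 2

lemma hasDerivAt_ofReal_id (r : ℝ) : HasDerivAt (fun s : ℝ => (s : ℂ)) 1 r := by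
  simpa using (hasDerivAt_id r).ofReal_comp

lemma abs_re_mul_conj_mul_le (z w : ℂ) {r : ℝ} (hr : 0 ≤ r) :
    |(z * conj w).re * r| ≤ ‖z‖ * ‖w‖ * r := by
  rw [abs_mul, abs_of_nonneg hr]
  gcongr
  simpa using Complex.abs_re_le_norm (z * conj w)

lemma re_radial_identity {r : ℝ} (hr : r ≠ 0) (a b c : ℂ) :
    ((2 * b + r * c) * conj a + (a + r * b) * conj b).re
      = ((c + b / r - a / r ^ 2) * conj a).re * r + ‖a + r * b‖ ^ 2 / r := by
  have hrC : (r : ℂ) ≠ 0 := Complex.ofReal_ne_zero.2 hr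
  rw [← Complex.re_mul_ofReal, ← Complex.ofReal_re (‖a + r * b‖ ^ 2), ← Complex.div_ofReal_re,
    Complex.ofReal_pow, ← Complex.mul_conj', ← Complex.add_re, map_add, map_mul,
    Complex.conj_ofReal]
  congr 1
  field_simp
  ring

lemma norm_le_mul_of_norm_deriv_le {E : Type*} [NormedAddCommGroup E] [NormedSpace ℝ E]
    {f f' : ℝ → E} {M b x : ℝ} (hf : ∀ y ∈ Icc 0 b, HasDerivWithinAt f (f' y) (Icc 0 b) y)
    (hM : ∀ y ∈ Icc 0 b, ‖f' y‖ ≤ M) (h0 : f 0 = 0) (hx : x ∈ Icc 0 b) : ‖f x‖ ≤ M * x := by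
  simpa [h0] using norm_image_sub_le_of_norm_deriv_le_segment' hf
    (fun y hy => hM y (Ico_subset_Icc_self hy)) x hx

lemma ofReal_mul_sqrt_rpow_two {a w : ℝ} (ha : 0 ≤ a) (hw : 0 ≤ w) :
    ENNReal.ofReal (a * √w) ^ (2 : ℝ) = ENNReal.ofReal (a ^ 2 * w) := by
  rw [ENNReal.ofReal_rpow_of_nonneg (by positivity) zero_le_two, Real.rpow_two, mul_pow,
    Real.sq_sqrt hw]

theorem lintegral_ofReal_norm_mul_norm_mul_le {α E F : Type*} [MeasurableSpace α]
    [NormedAddCommGroup E] [NormedAddCommGroup F] {μ : Measure α} {φ : α → E} {ψ : α → F}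
    {w : α → ℝ} (hφ : AEStronglyMeasurable φ μ) (hψ : AEStronglyMeasurable ψ μ)
    (hw : AEMeasurable w μ) (hw0 : ∀ᵐ x ∂μ, 0 ≤ w x) :
    ∫⁻ x, ENNReal.ofReal (‖φ x‖ * ‖ψ x‖ * w x) ∂μ ≤
      (∫⁻ x, ENNReal.ofReal (‖φ x‖ ^ 2 * w x) ∂μ) ^ ((1 : ℝ) / 2) *
        (∫⁻ x, ENNReal.ofReal (‖ψ x‖ ^ 2 * w x) ∂μ) ^ ((1 : ℝ) / 2) := by
  have holder := ENNReal.lintegral_mul_le_Lp_mul_Lq μ Real.HolderConjugate.two_two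
    (ENNReal.measurable_ofReal.comp_aemeasurable (hφ.norm.aemeasurable.mul hw.sqrt))
    (ENNReal.measurable_ofReal.comp_aemeasurable (hψ.norm.aemeasurable.mul hw.sqrt))
  convert holder using 1
  · refine lintegral_congr_ae (hw0.mono fun x hx => ?_)
    simp only [Function.comp_apply, Pi.mul_apply]
    rw [← ENNReal.ofReal_mul (by positivity), mul_mul_mul_comm, Real.mul_self_sqrt hx]
  · congr 2 <;> refine lintegral_congr_ae (hw0.mono fun x hx => ?_) <;>
      exact (ofReal_mul_sqrt_rpow_two (norm_nonneg _) hx).symm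

section Radial

variable {g g' g'' : ℝ → ℂ}

lemma continuousOn_radialOp {s : Set ℝ} (hg : ContinuousOn g s) (hg' : ContinuousOn g' s)
    (hg'' : ContinuousOn g'' s) (hs : ∀ r ∈ s, r ≠ 0) : ContinuousOn (radialOp g g' g'') s := by
  unfold radialOp
  fun_prop (disch := simp_all)

theorem hasDerivAt_re_radial_mul_conj {r : ℝ} (hr : r ≠ 0) (hg : HasDerivAt g (g' r) r)
    (hg' : HasDerivAt g' (g'' r) r) :
    HasDerivAt (fun s : ℝ => ((g s + s * g' s) * conj (g s)).re)
      ((radialOp g g' g'' r * conj (g r)).re * r + ‖g r + r * g' r‖ ^ 2 / r) r := by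
  have hv : HasDerivAt (fun s : ℝ => g s + s * g' s) (2 * g' r + r * g'' r) r :=
    (hg.add ((hasDerivAt_ofReal_id r).mul hg')).congr_deriv (by ring)
  exact (Complex.reCLM.hasFDerivAt.comp_hasDerivAt r (hv.mul hg.star)).congr_deriv
    (re_radial_identity hr _ _ _)

lemma norm_add_mul_sq_div_le {r M : ℝ} (hr : r ∈ Ioo 0 1) (hg : ‖g r‖ ≤ M * r)
    (hg' : ‖g' r‖ ≤ M) : ‖g r + r * g' r‖ ^ 2 / r ≤ 4 * M ^ 2 := by
  have hv : ‖g r + r * g' r‖ ≤ 2 * M * r := by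
    calc ‖g r + r * g' r‖ ≤ ‖g r‖ + r * ‖g' r‖ := by
          simpa [abs_of_pos hr.1] using norm_add_le (g r) (r * g' r)
      _ ≤ 2 * M * r := by nlinarith [hr.1]
  rw [div_le_iff₀ hr.1]
  nlinarith [hr.1, hr.2, norm_nonneg (g r + r * g' r)]

lemma norm_radialOp_mul_le {r M N : ℝ} (hr : r ∈ Ioo 0 1) (hg : ‖g r‖ ≤ M * r)
    (hg' : ‖g' r‖ ≤ M) (hg'' : ‖g'' r‖ ≤ N) : ‖radialOp g g' g'' r‖ * r ≤ N + 2 * M := by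
  have hr0 : (r : ℂ) ≠ 0 := Complex.ofReal_ne_zero.2 hr.1.ne'
  have hL : radialOp g g' g'' r * r = r * g'' r + g' r - g r / r := by
    unfold radialOp; field_simp
  have hgr : ‖g r / r‖ ≤ M := by
    rw [norm_div, Complex.norm_real, Real.norm_of_nonneg hr.1.le, div_le_iff₀ hr.1]; exact hg
  calc ‖radialOp g g' g'' r‖ * r = ‖r * g'' r + g' r - g r / r‖ := by
        rw [← hL, norm_mul, Complex.norm_real, Real.norm_of_nonneg hr.1.le]
    _ ≤ ‖(r : ℂ) * g'' r‖ + ‖g' r‖ + ‖g r / r‖ := norm_sub_le_of_le (norm_add_le _ _) le_rfl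
    _ = r * ‖g'' r‖ + ‖g' r‖ + ‖g r / r‖ := by
        rw [norm_mul, Complex.norm_real, Real.norm_of_nonneg hr.1.le]
    _ ≤ N + 2 * M := by nlinarith [hr.1, hr.2, norm_nonneg (g'' r)]

theorem integrableOn_radial_terms
    (hg : ∀ x ∈ Icc (0 : ℝ) 1, HasDerivWithinAt g (g' x) (Icc 0 1) x)
    (hg' : ∀ x ∈ Icc (0 : ℝ) 1, HasDerivWithinAt g' (g'' x) (Icc 0 1) x)
    (hg'' : ContinuousOn g'' (Icc 0 1)) (h0 : g 0 = 0) :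
    IntegrableOn (fun r : ℝ => ‖g r + r * g' r‖ ^ 2 / r) (Ioo 0 1) ∧
      IntegrableOn (fun r => (radialOp g g' g'' r * conj (g r)).re * r) (Ioo 0 1) := by
  have hgc : ContinuousOn g (Ioo 0 1) := fun x hx =>
    ((hg x (Ioo_subset_Icc_self hx)).continuousWithinAt).mono Ioo_subset_Icc_self
  have hg'c : ContinuousOn g' (Icc 0 1) := fun x hx => (hg' x hx).continuousWithinAt
  have hpos : ∀ r ∈ Ioo (0 : ℝ) 1, r ≠ 0 := fun r hr => hr.1.ne'
  have hLc := continuousOn_radialOp hgc (hg'c.mono Ioo_subset_Icc_self)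
    (hg''.mono Ioo_subset_Icc_self) hpos
  obtain ⟨M, hM⟩ := isCompact_Icc.exists_bound_of_continuousOn hg'c
  obtain ⟨N, hN⟩ := isCompact_Icc.exists_bound_of_continuousOn hg''
  have hM0 : 0 ≤ M := (norm_nonneg _).trans (hM 0 (left_mem_Icc.2 zero_le_one))
  have hgM : ∀ r ∈ Ioo (0 : ℝ) 1, ‖g r‖ ≤ M * r := fun r hr =>
    norm_le_mul_of_norm_deriv_le hg hM h0 (Ioo_subset_Icc_self hr)
  have hBc : ContinuousOn (fun r : ℝ => ‖g r + r * g' r‖ ^ 2 / r) (Ioo 0 1) := by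
    have := hg'c.mono Ioo_subset_Icc_self
    fun_prop (disch := assumption)
  have hAc : ContinuousOn (fun r => (radialOp g g' g'' r * conj (g r)).re * r) (Ioo 0 1) :=
    (Complex.continuous_re.comp_continuousOn
      (hLc.mul (Complex.continuous_conj.comp_continuousOn hgc))).mul continuousOn_id
  constructor
  · refine (integrableOn_const (C := 4 * M ^ 2) measure_Ioo_lt_top.ne).mono'
      (hBc.aestronglyMeasurable measurableSet_Ioo)
      ((ae_restrict_iff' measurableSet_Ioo).2 (ae_of_all _ fun r hr => ?_))
    rw [Real.norm_of_nonneg (div_nonneg (sq_nonneg _) hr.1.le)]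
    exact norm_add_mul_sq_div_le hr (hgM r hr) (hM r (Ioo_subset_Icc_self hr))
  · refine (integrableOn_const (C := (N + 2 * M) * M) measure_Ioo_lt_top.ne).mono'
      (hAc.aestronglyMeasurable measurableSet_Ioo)
      ((ae_restrict_iff' measurableSet_Ioo).2 (ae_of_all _ fun r hr => ?_))
    have hL := norm_radialOp_mul_le hr (hgM r hr) (hM r (Ioo_subset_Icc_self hr))
      (hN r (Ioo_subset_Icc_self hr))
    have hgr : ‖g r‖ ≤ M := (hgM r hr).trans (mul_le_of_le_one_right hM0 hr.2.le)
    calc ‖(radialOp g g' g'' r * conj (g r)).re * r‖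
        ≤ ‖radialOp g g' g'' r‖ * r * ‖g r‖ := by
          rw [Real.norm_eq_abs, mul_right_comm]
          exact abs_re_mul_conj_mul_le _ _ hr.1.le
      _ ≤ (N + 2 * M) * M :=
          mul_le_mul hL hgr (norm_nonneg _) ((mul_nonneg (norm_nonneg _) hr.1.le).trans hL)

theorem integral_norm_add_mul_sq_div_eq_neg
    (hg : ∀ x ∈ Icc (0 : ℝ) 1, HasDerivWithinAt g (g' x) (Icc 0 1) x)
    (hg' : ∀ x ∈ Icc (0 : ℝ) 1, HasDerivWithinAt g' (g'' x) (Icc 0 1) x)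
    (hg'' : ContinuousOn g'' (Icc 0 1)) (h0 : g 0 = 0) (h1 : g 1 = 0) :
    ∫ r in Ioo 0 1, ‖g r + r * g' r‖ ^ 2 / r =
      -∫ r in Ioo 0 1, (radialOp g g' g'' r * conj (g r)).re * r := by
  obtain ⟨hB, hA⟩ := integrableOn_radial_terms hg hg' hg'' h0
  have hgc : ContinuousOn g (Icc 0 1) := fun x hx => (hg x hx).continuousWithinAt
  have hg'c : ContinuousOn g' (Icc 0 1) := fun x hx => (hg' x hx).continuousWithinAt
  have hFc : ContinuousOn (fun s : ℝ => ((g s + s * g' s) * conj (g s)).re) (Icc 0 1) :=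
    Complex.continuous_re.comp_continuousOn ((hgc.add (Complex.continuous_ofReal.continuousOn.mul
      hg'c)).mul (Complex.continuous_conj.comp_continuousOn hgc))
  have hF := intervalIntegral.integral_eq_sub_of_hasDerivAt_of_le zero_le_one hFc
    (fun r hr => hasDerivAt_re_radial_mul_conj hr.1.ne'
      ((hg r (Ioo_subset_Icc_self hr)).hasDerivAt (Icc_mem_nhds hr.1 hr.2))
      ((hg' r (Ioo_subset_Icc_self hr)).hasDerivAt (Icc_mem_nhds hr.1 hr.2)))
    ((intervalIntegrable_iff_integrableOn_Ioo_of_le zero_le_one).2 (hA.add hB))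
  rw [intervalIntegral.integral_of_le zero_le_one, integral_Ioc_eq_integral_Ioo,
    integral_add hA hB] at hF
  simp only [h0, h1, map_zero, mul_zero, Complex.zero_re, sub_zero] at hF
  linarith

theorem lintegral_norm_add_mul_sq_div_le
    (hg : ∀ x ∈ Icc (0 : ℝ) 1, HasDerivWithinAt g (g' x) (Icc 0 1) x)
    (hg' : ∀ x ∈ Icc (0 : ℝ) 1, HasDerivWithinAt g' (g'' x) (Icc 0 1) x)
    (hg'' : ContinuousOn g'' (Icc 0 1)) (h0 : g 0 = 0) (h1 : g 1 = 0) :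
    ∫⁻ r in Ioo (0 : ℝ) 1, ENNReal.ofReal (‖g r + r * g' r‖ ^ 2 / r) ≤
      (∫⁻ r in Ioo (0 : ℝ) 1, ENNReal.ofReal (‖radialOp g g' g'' r‖ ^ 2 * r)) ^ ((1 : ℝ) / 2) *
        (∫⁻ r in Ioo (0 : ℝ) 1, ENNReal.ofReal (‖g r‖ ^ 2 * r)) ^ ((1 : ℝ) / 2) := by
  have hgc : ContinuousOn g (Ioo 0 1) := fun x hx =>
    ((hg x (Ioo_subset_Icc_self hx)).continuousWithinAt).mono Ioo_subset_Icc_self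
  have hLc : ContinuousOn (radialOp g g' g'') (Ioo 0 1) :=
    continuousOn_radialOp hgc (fun x hx =>
      ((hg' x (Ioo_subset_Icc_self hx)).continuousWithinAt).mono Ioo_subset_Icc_self)
      (hg''.mono Ioo_subset_Icc_self) fun r hr => hr.1.ne'
  have hpos : ∀ᵐ r ∂volume.restrict (Ioo (0 : ℝ) 1), 0 < r :=
    (ae_restrict_iff' measurableSet_Ioo).2 (ae_of_all _ fun r hr => hr.1)
  calc _ = ENNReal.ofReal (∫ r in Ioo 0 1, ‖g r + r * g' r‖ ^ 2 / r) :=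
        (ofReal_integral_eq_lintegral_ofReal (integrableOn_radial_terms hg hg' hg'' h0).1
          (hpos.mono fun r hr => div_nonneg (sq_nonneg _) hr.le)).symm
    _ = ENNReal.ofReal (∫ r in Ioo 0 1, -((radialOp g g' g'' r * conj (g r)).re * r)) := by
        rw [integral_neg, integral_norm_add_mul_sq_div_eq_neg hg hg' hg'' h0 h1]
    _ ≤ ∫⁻ r in Ioo 0 1, ‖-((radialOp g g' g'' r * conj (g r)).re * r)‖ₑ :=
        (Real.ofReal_le_enorm _).trans (enorm_integral_le_lintegral_enorm _)
    _ ≤ ∫⁻ r in Ioo 0 1, ENNReal.ofReal (‖radialOp g g' g'' r‖ * ‖g r‖ * r) :=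
        setLIntegral_mono' measurableSet_Ioo fun r hr => by
          rw [enorm_neg, Real.enorm_eq_ofReal_abs]
          exact ENNReal.ofReal_le_ofReal (abs_re_mul_conj_mul_le _ _ hr.1.le)
    _ ≤ _ := lintegral_ofReal_norm_mul_norm_mul_le (hLc.aestronglyMeasurable measurableSet_Ioo)
        (hgc.aestronglyMeasurable measurableSet_Ioo) aemeasurable_id (hpos.mono fun _ => le_of_lt)

end Radial

/-- For a C² function `g` on `[0,1]` with `g(0) = g(1) = 0` and
`L g = g'' + g'/r − g/r²`, one has
`∫₀¹ |(rg)'|²/r dr ≤ (∫₀¹ |Lg|² r dr)^{1/2} (∫₀¹ |g|² r dr)^{1/2}`. -/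
theorem stmt1 (g : ℝ → ℂ) (hg : ContDiffOn ℝ 2 g (Icc (0:ℝ) 1))
    (h0 : g 0 = 0) (h1 : g 1 = 0) :
    (∫⁻ r in Ioo (0:ℝ) 1,
        ENNReal.ofReal (‖derivWithin (fun s : ℝ => (s : ℂ) * g s) (Icc (0:ℝ) 1) r‖ ^ 2 / r)) ≤
      (∫⁻ r in Ioo (0:ℝ) 1,
          ENNReal.ofReal
            (‖derivWithin (derivWithin g (Icc (0:ℝ) 1)) (Icc (0:ℝ) 1) r
                + derivWithin g (Icc (0:ℝ) 1) r / (r : ℂ) - g r / (r : ℂ) ^ 2‖ ^ 2 * r))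
          ^ ((1 : ℝ) / 2) *
      (∫⁻ r in Ioo (0:ℝ) 1, ENNReal.ofReal (‖g r‖ ^ 2 * r)) ^ ((1 : ℝ) / 2) := by
  have hI : UniqueDiffOn ℝ (Icc (0 : ℝ) 1) := uniqueDiffOn_Icc zero_lt_one
  set g' := derivWithin g (Icc (0 : ℝ) 1)
  have hg' : ContDiffOn ℝ 1 g' (Icc 0 1) := hg.derivWithin hI (by norm_num)
  have hd : ∀ x ∈ Icc (0 : ℝ) 1, HasDerivWithinAt g (g' x) (Icc 0 1) x := fun x hx =>
    (hg.differentiableOn (by norm_num) x hx).hasDerivWithinAt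
  have hderiv : ∀ r ∈ Ioo (0 : ℝ) 1,
      derivWithin (fun s : ℝ => (s : ℂ) * g s) (Icc 0 1) r = g r + r * g' r := fun r hr => by
    have hnhds : Icc (0 : ℝ) 1 ∈ nhds r := Icc_mem_nhds hr.1 hr.2
    rw [derivWithin_of_mem_nhds hnhds, ((hasDerivAt_ofReal_id r).fun_mul
      ((hd r (mem_of_mem_nhds hnhds)).hasDerivAt hnhds)).deriv, one_mul]
  rw [setLIntegral_congr_fun measurableSet_Ioo fun r hr => by rw [hderiv r hr]]
  exact lintegral_norm_add_mul_sq_div_le hd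
    (fun x hx => (hg'.differentiableOn one_ne_zero x hx).hasDerivWithinAt)
    (hg'.continuousOn_derivWithin hI le_rfl) h0 h1
end

section
/- Let g be a C¹ function on [0,1] with g(0) = 0. Then ∫₀¹ |g(r)|² dr ≤ (1/2) ∫₀¹ |g'(r)|² (1 − r²) dr. -/
open MeasureTheory Set
open scoped ENNReal

/-!
Writing `g r = ∫₀ʳ g'`, Cauchy–Schwarz gives `‖g r‖² ≤ r ∫₀ʳ ‖g'‖²`. Integrating over `r ∈ (0,1)`
and exchanging the order of integration (Tonelli on the triangle `t < r`) turns the weight `r`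
into `∫ₜ¹ r dr = (1 - t²) / 2`.
-/

theorem ENNReal.lintegral_sq_le_measure_univ_mul {α : Type*} [MeasurableSpace α]
    (μ : Measure α) {f : α → ℝ≥0∞} (hf : AEMeasurable f μ) :
    (∫⁻ x, f x ∂μ) ^ 2 ≤ μ univ * ∫⁻ x, f x ^ 2 ∂μ := by
  have hpq : Real.HolderConjugate 2 2 := ⟨by norm_num, by norm_num, by norm_num⟩
  have holder := ENNReal.lintegral_mul_le_Lp_mul_Lq μ hpq hf aemeasurable_const (g := fun _ ↦ 1)
  simp only [Pi.mul_apply, mul_one, lintegral_const, one_pow, one_mul,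
    ENNReal.rpow_two] at holder
  calc (∫⁻ x, f x ∂μ) ^ 2
      ≤ ((∫⁻ x, f x ^ 2 ∂μ) ^ (1 / 2 : ℝ) * μ univ ^ (1 / 2 : ℝ)) ^ 2 := by gcongr
    _ = μ univ * ∫⁻ x, f x ^ 2 ∂μ := by
      rw [← ENNReal.mul_rpow_of_nonneg _ _ (by norm_num), ← ENNReal.rpow_natCast,
        ← ENNReal.rpow_mul]
      norm_num [mul_comm]

theorem enorm_integral_sq_le_measure_univ_mul {α E : Type*} [MeasurableSpace α]
    [NormedAddCommGroup E] [NormedSpace ℝ E] (μ : Measure α) {f : α → E}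
    (hf : AEStronglyMeasurable f μ) :
    ‖∫ x, f x ∂μ‖ₑ ^ 2 ≤ μ univ * ∫⁻ x, ‖f x‖ₑ ^ 2 ∂μ :=
  (pow_le_pow_left₀ zero_le (enorm_integral_le_lintegral_enorm f) 2).trans
    (ENNReal.lintegral_sq_le_measure_univ_mul μ hf.enorm)

theorem enorm_sub_sq_le_mul_lintegral_enorm_deriv_sq {E : Type*} [NormedAddCommGroup E]
    [NormedSpace ℝ E] [CompleteSpace E] {f f' : ℝ → E} {a b : ℝ} (hab : a ≤ b)
    (hcont : ContinuousOn f (Icc a b)) (hderiv : ∀ x ∈ Ioo a b, HasDerivAt f (f' x) x)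
    (hint : IntervalIntegrable f' volume a b) :
    ‖f b - f a‖ₑ ^ 2 ≤ ENNReal.ofReal (b - a) * ∫⁻ t in Ioo a b, ‖f' t‖ₑ ^ 2 := by
  have hftc : ∫ t in Ioo a b, f' t = f b - f a := by
    rw [← integral_Ioc_eq_integral_Ioo, ← intervalIntegral.integral_of_le hab,
      intervalIntegral.integral_eq_sub_of_hasDerivAt_of_le hab hcont hderiv hint]
  have hmeas : AEStronglyMeasurable f' (volume.restrict (Ioo a b)) :=
    ((intervalIntegrable_iff_integrableOn_Ioo_of_le hab).1 hint).aestronglyMeasurable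
  simpa [hftc, Real.volume_Ioo] using enorm_integral_sq_le_measure_univ_mul _ hmeas

theorem setLIntegral_Ioo_setLIntegral_Ioo_swap {μ ν : Measure ℝ} [SFinite μ] [SFinite ν]
    {f : ℝ → ℝ → ℝ≥0∞} {a b : ℝ}
    (hf : AEMeasurable (Function.uncurry f)
      ((μ.restrict (Ioo a b)).prod (ν.restrict (Ioo a b)))) :
    ∫⁻ r in Ioo a b, ∫⁻ t in Ioo a r, f r t ∂ν ∂μ =
      ∫⁻ t in Ioo a b, ∫⁻ r in Ioo t b, f r t ∂μ ∂ν := by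
  set G : ℝ × ℝ → ℝ≥0∞ := {p | p.2 < p.1}.indicator (Function.uncurry f)
  have hG : AEMeasurable G ((μ.restrict (Ioo a b)).prod (ν.restrict (Ioo a b))) :=
    hf.indicator (measurableSet_lt measurable_snd measurable_fst)
  calc ∫⁻ r in Ioo a b, ∫⁻ t in Ioo a r, f r t ∂ν ∂μ
      = ∫⁻ r in Ioo a b, ∫⁻ t in Ioo a b, G (r, t) ∂ν ∂μ := by
        refine setLIntegral_congr_fun measurableSet_Ioo fun r hr ↦ ?_
        change _ = ∫⁻ t in Ioo a b, (Iio r).indicator (f r) t ∂ν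
        rw [lintegral_indicator measurableSet_Iio, Measure.restrict_restrict measurableSet_Iio,
          Iio_inter_Ioo, min_eq_left hr.2.le]
    _ = ∫⁻ t in Ioo a b, ∫⁻ r in Ioo a b, G (r, t) ∂μ ∂ν :=
        lintegral_lintegral_swap (f := fun r t ↦ G (r, t)) hG
    _ = ∫⁻ t in Ioo a b, ∫⁻ r in Ioo t b, f r t ∂μ ∂ν := by
        refine setLIntegral_congr_fun measurableSet_Ioo fun t ht ↦ ?_
        change ∫⁻ r in Ioo a b, (Ioi t).indicator (fun r ↦ f r t) r ∂μ = _
        rw [lintegral_indicator measurableSet_Ioi, Measure.restrict_restrict measurableSet_Ioi,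
          Ioi_inter_Ioo, max_eq_left ht.1.le]

theorem setLIntegral_Ioo_ofReal {a b : ℝ} (ha : 0 ≤ a) (hab : a ≤ b) :
    ∫⁻ r in Ioo a b, ENNReal.ofReal r = ENNReal.ofReal ((b ^ 2 - a ^ 2) / 2) := by
  rw [← integral_id, intervalIntegral.integral_of_le hab, integral_Ioc_eq_integral_Ioo,
    ofReal_integral_eq_lintegral_ofReal]
  · exact continuous_id.integrableOn_Icc.mono_set Ioo_subset_Icc_self
  · exact (ae_restrict_iff' measurableSet_Ioo).2 (ae_of_all _ fun r hr ↦ ha.trans hr.1.le)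

/-- Hardy–Littlewood–Pólya type inequality: for a C¹ function `g` on `[0,1]`
with `g(0) = 0`, `∫₀¹ |g(r)|² dr ≤ (1/2) ∫₀¹ |g'(r)|² (1 − r²) dr`. -/
theorem stmt3 (g : ℝ → ℂ) (hg : ContDiffOn ℝ 1 g (Icc (0:ℝ) 1)) (h0 : g 0 = 0) :
    (∫⁻ r in Ioo (0:ℝ) 1, ENNReal.ofReal (‖g r‖ ^ 2)) ≤
      (1 / 2 : ENNReal) *
        ∫⁻ r in Ioo (0:ℝ) 1,
          ENNReal.ofReal (‖derivWithin g (Icc (0:ℝ) 1) r‖ ^ 2 * (1 - r ^ 2)) := by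
  set g' := derivWithin g (Icc (0:ℝ) 1)
  have hg' : ContinuousOn g' (Icc 0 1) :=
    hg.continuousOn_derivWithin (uniqueDiffOn_Icc one_pos) le_rfl
  have hg'_aemeas : AEMeasurable (fun t ↦ ‖g' t‖ₑ ^ 2) (volume.restrict (Ioo 0 1)) :=
    ((hg'.mono Ioo_subset_Icc_self).aemeasurable measurableSet_Ioo).enorm.pow_const 2
  have hderiv : ∀ x ∈ Ioo (0:ℝ) 1, HasDerivAt g (g' x) x := fun x hx ↦
    (hg.differentiableOn one_ne_zero x (Ioo_subset_Icc_self hx)).hasDerivWithinAt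
      |>.hasDerivAt (Icc_mem_nhds hx.1 hx.2)
  have hpointwise : ∀ r ∈ Ioo (0:ℝ) 1,
      ENNReal.ofReal (‖g r‖ ^ 2) ≤ ENNReal.ofReal r * ∫⁻ t in Ioo 0 r, ‖g' t‖ₑ ^ 2 := by
    intro r ⟨hr0, hr1⟩
    have hsub : Icc 0 r ⊆ Icc (0:ℝ) 1 := Icc_subset_Icc_right hr1.le
    have hbound := enorm_sub_sq_le_mul_lintegral_enorm_deriv_sq hr0.le
      (hg.continuousOn.mono hsub) (fun x hx ↦ hderiv x ⟨hx.1, hx.2.trans hr1⟩)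
      ((hg'.mono hsub).intervalIntegrable_of_Icc hr0.le)
    simpa [h0, ENNReal.ofReal_pow, ofReal_norm] using hbound
  calc (∫⁻ r in Ioo (0:ℝ) 1, ENNReal.ofReal (‖g r‖ ^ 2))
      ≤ ∫⁻ r in Ioo (0:ℝ) 1, ∫⁻ t in Ioo 0 r, ENNReal.ofReal r * ‖g' t‖ₑ ^ 2 := by
        refine setLIntegral_mono' measurableSet_Ioo fun r hr ↦ ?_
        rw [lintegral_const_mul' _ _ ENNReal.ofReal_ne_top]
        exact hpointwise r hr
    _ = ∫⁻ t in Ioo (0:ℝ) 1, ∫⁻ r in Ioo t 1, ENNReal.ofReal r * ‖g' t‖ₑ ^ 2 :=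
        setLIntegral_Ioo_setLIntegral_Ioo_swap
          (f := fun r t ↦ ENNReal.ofReal r * ‖g' t‖ₑ ^ 2)
          (measurable_fst.ennreal_ofReal.aemeasurable.fun_mul hg'_aemeas.comp_snd)
    _ = _ := by
        rw [← lintegral_const_mul' _ _ (by norm_num)]
        refine setLIntegral_congr_fun measurableSet_Ioo fun t ht ↦ ?_
        rw [lintegral_mul_const _ ENNReal.measurable_ofReal,
          setLIntegral_Ioo_ofReal ht.1.le ht.2.le, one_pow, ENNReal.ofReal_div_of_pos two_pos,
          ENNReal.ofReal_ofNat, ENNReal.ofReal_mul (by positivity),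
          ENNReal.ofReal_pow (norm_nonneg _), ofReal_norm, div_eq_mul_inv, one_div]
        ring
end

section
/- There exists a constant C > 0 such that for every C¹ function g on [0,1] with g(0) = 0, one has ∫₀¹ |g(r)|² r dr ≤ C ∫₀¹ |(d/dr)(r g(r))|² ((1 − r²)/r) dr. -/
open MeasureTheory Set
open scoped ENNReal

/-!
Put `h r = r * g r`, so that `h 0 = 0`. Bounding `‖h r‖` by `∫₀^r ‖h'‖` and applying
Cauchy–Schwarz against the weight `w t = (1 - t²) / t` gives
`‖h r‖² ≤ R * ∫₀^r t / (1 - t²) dt = R * (-log (1 - r²) / 2)`, where `R` is the right-hand side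
integral. Hence `‖g r‖² r = ‖h r‖² / r ≤ R / √(1 - r)`, and integrating over `(0, 1)` gives the
inequality with `C = 2`.
-/

theorem ENNReal.sq_lintegral_le_lintegral_sq_mul_mul_lintegral_inv {α : Type*} [MeasurableSpace α]
    {μ : Measure α} {f w : α → ℝ≥0∞} (hf : AEMeasurable f μ) (hw : AEMeasurable w μ)
    (hw0 : ∀ᵐ a ∂μ, w a ≠ 0) (hw_top : ∀ᵐ a ∂μ, w a ≠ ∞) :
    (∫⁻ a, f a ∂μ) ^ 2 ≤ (∫⁻ a, f a ^ 2 * w a ∂μ) * ∫⁻ a, (w a)⁻¹ ∂μ := by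
  have hsplit : ∀ᵐ a ∂μ, f a = (f a ^ 2 * w a) ^ (2⁻¹ : ℝ) * (w a)⁻¹ ^ (2⁻¹ : ℝ) := by
    filter_upwards [hw0, hw_top] with a ha0 ha_top
    rw [← ENNReal.mul_rpow_of_nonneg _ _ (by norm_num), mul_assoc,
      ENNReal.mul_inv_cancel ha0 ha_top, mul_one, ← ENNReal.rpow_natCast,
      ← ENNReal.rpow_mul]
    norm_num
  have holder := ENNReal.lintegral_mul_norm_pow_le (f := fun a => f a ^ 2 * w a)
    (g := fun a => (w a)⁻¹) ((hf.pow_const 2).mul hw) hw.inv (p := 2⁻¹) (q := 2⁻¹)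
    (by norm_num) (by norm_num) (by norm_num)
  rw [← lintegral_congr_ae hsplit, ← ENNReal.mul_rpow_of_nonneg _ _ (by norm_num)] at holder
  calc (∫⁻ a, f a ∂μ) ^ 2
      ≤ (((∫⁻ a, f a ^ 2 * w a ∂μ) * ∫⁻ a, (w a)⁻¹ ∂μ) ^ (2⁻¹ : ℝ)) ^ 2 := by gcongr
    _ = (∫⁻ a, f a ^ 2 * w a ∂μ) * ∫⁻ a, (w a)⁻¹ ∂μ := by
      rw [← ENNReal.rpow_natCast, ← ENNReal.rpow_mul]; norm_num

theorem enorm_sub_sq_le_lintegral_deriv_sq_mul {E : Type*} [NormedAddCommGroup E]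
    [NormedSpace ℝ E] [CompleteSpace E] {h : ℝ → E} {w : ℝ → ℝ} {a b : ℝ}
    (hh : ContDiffOn ℝ 1 h (Icc a b)) (hab : a ≤ b)
    (hw : Measurable w) (hw_pos : ∀ t ∈ Ioo a b, 0 < w t) :
    ‖h b - h a‖ₑ ^ 2 ≤ (∫⁻ t in Icc a b, ‖deriv h t‖ₑ ^ 2 * ENNReal.ofReal (w t)) *
      ∫⁻ t in Icc a b, ENNReal.ofReal (w t)⁻¹ := by
  have hw_pos_ae : ∀ᵐ t ∂volume.restrict (Icc a b), 0 < w t := by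
    rw [← restrict_Ioo_eq_restrict_Icc]
    exact (ae_restrict_iff' measurableSet_Ioo).2 (.of_forall hw_pos)
  have hinv : ∫⁻ t in Icc a b, ENNReal.ofReal (w t)⁻¹ =
      ∫⁻ t in Icc a b, (ENNReal.ofReal (w t))⁻¹ :=
    lintegral_congr_ae (hw_pos_ae.mono fun t ht => ENNReal.ofReal_inv_of_pos ht)
  rw [hinv]
  calc ‖h b - h a‖ₑ ^ 2 ≤ (∫⁻ t in Icc a b, ‖deriv h t‖ₑ) ^ 2 := by
        gcongr; exact enorm_sub_le_lintegral_deriv_of_contDiffOn_Icc hh hab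
    _ ≤ _ := ENNReal.sq_lintegral_le_lintegral_sq_mul_mul_lintegral_inv
        (aestronglyMeasurable_deriv h _).enorm hw.ennreal_ofReal.aemeasurable
        (hw_pos_ae.mono fun t ht => by simpa using ht) (.of_forall fun _ => ENNReal.ofReal_ne_top)

theorem lintegral_Ioo_ofReal_eq_sub_of_hasDerivAt {g g' : ℝ → ℝ} {a b : ℝ} (hab : a ≤ b)
    (hcont : ContinuousOn g (Icc a b)) (hderiv : ∀ x ∈ Ioo a b, HasDerivAt g (g' x) x)
    (hg' : ∀ x ∈ Ioo a b, 0 ≤ g' x) :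
    ∫⁻ x in Ioo a b, ENNReal.ofReal (g' x) = ENNReal.ofReal (g b - g a) := by
  have hint := intervalIntegral.integrableOn_deriv_of_nonneg hcont hderiv hg'
  have hg'_ae : 0 ≤ᵐ[volume.restrict (Ioc a b)] g' := by
    rw [← restrict_Ioo_eq_restrict_Ioc]
    exact (ae_restrict_iff' measurableSet_Ioo).2 (.of_forall hg')
  rw [restrict_Ioo_eq_restrict_Ioc, ← ofReal_integral_eq_lintegral_ofReal hint hg'_ae,
    ← intervalIntegral.integral_of_le hab, intervalIntegral.integral_eq_sub_of_hasDerivAt_of_le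
      hab hcont hderiv ((intervalIntegrable_iff_integrableOn_Ioc_of_le hab).2 hint)]

theorem lintegral_Ioo_div_one_sub_sq {r : ℝ} (hr0 : 0 ≤ r) (hr1 : r < 1) :
    ∫⁻ t in Ioo 0 r, ENNReal.ofReal (t / (1 - t ^ 2)) =
      ENNReal.ofReal (-Real.log (1 - r ^ 2) / 2) := by
  have hpos : ∀ t ∈ Icc 0 r, 0 < 1 - t ^ 2 := fun t ht => by nlinarith [ht.1, ht.2]
  have hderiv : ∀ t ∈ Icc 0 r,
      HasDerivAt (fun u => -Real.log (1 - u ^ 2) / 2) (t / (1 - t ^ 2)) t := by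
    intro t ht
    refine ((((hasDerivAt_pow 2 t).const_sub 1).log (hpos t ht).ne').neg.div_const 2).congr_deriv
      ?_
    field_simp
    ring
  rw [lintegral_Ioo_ofReal_eq_sub_of_hasDerivAt hr0
    (fun t ht => (hderiv t ht).continuousAt.continuousWithinAt)
    (fun t ht => hderiv t (Ioo_subset_Icc_self ht))
    (fun t ht => (div_pos ht.1 (hpos t (Ioo_subset_Icc_self ht))).le)]
  simp

theorem lintegral_Ioo_inv_sqrt_one_sub :
    ∫⁻ r in Ioo (0 : ℝ) 1, ENNReal.ofReal (√(1 - r))⁻¹ = 2 := by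
  have hderiv : ∀ r ∈ Ioo (0 : ℝ) 1, HasDerivAt (fun u => -2 * √(1 - u)) (√(1 - r))⁻¹ r := by
    intro r hr
    have hs : 1 - r ≠ 0 := by linarith [hr.2]
    refine ((((hasDerivAt_id' r).const_sub 1).sqrt hs).const_mul (-2)).congr_deriv ?_
    field_simp
  rw [lintegral_Ioo_ofReal_eq_sub_of_hasDerivAt zero_le_one (by fun_prop) hderiv
    (fun r _ => inv_nonneg.2 (Real.sqrt_nonneg _))]
  norm_num

theorem neg_log_one_sub_sq_div_le {r : ℝ} (hr0 : 0 < r) (hr1 : r < 1) :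
    -Real.log (1 - r ^ 2) / 2 / r ≤ (√(1 - r))⁻¹ := by
  -- Use `-log s ≤ 1/s - 1` at `s = √(1 - r²)`, not at `1 - r²`: the latter only gives
  -- `r / (2 (1 - r²))`, which is not integrable near `1`.
  set s := √(1 - r ^ 2)
  have hs2 : s ^ 2 = 1 - r ^ 2 := Real.sq_sqrt (by nlinarith)
  have hs0 : 0 < s := Real.sqrt_pos.2 (by nlinarith)
  have hs1 : s ≤ 1 := Real.sqrt_le_one.2 (by nlinarith)
  have hlog : -Real.log s ≤ s⁻¹ - 1 := by
    simpa [Real.log_inv] using Real.log_le_sub_one_of_pos (inv_pos.2 hs0)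
  calc -Real.log (1 - r ^ 2) / 2 / r = -Real.log s / r := by
        rw [← hs2, Real.log_pow]; ring
    _ ≤ (s⁻¹ - 1) / r := by gcongr
    _ ≤ 1 / s := by
        rw [div_le_div_iff₀ hr0 hs0]
        field_simp
        nlinarith
    _ ≤ (√(1 - r))⁻¹ := by
        rw [one_div]
        exact inv_anti₀ (Real.sqrt_pos.2 (by linarith)) (Real.sqrt_le_sqrt (by nlinarith))

theorem enorm_sq_le_lintegral_mul_neg_log {E : Type*} [NormedAddCommGroup E] [NormedSpace ℝ E]
    [CompleteSpace E] {h : ℝ → E} (hh : ContDiffOn ℝ 1 h (Icc 0 1)) (h0 : h 0 = 0) {r : ℝ}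
    (hr0 : 0 ≤ r) (hr1 : r < 1) :
    ‖h r‖ₑ ^ 2 ≤ (∫⁻ t in Ioo 0 1,
        ENNReal.ofReal (‖derivWithin h (Icc 0 1) t‖ ^ 2 * ((1 - t ^ 2) / t))) *
      ENNReal.ofReal (-Real.log (1 - r ^ 2) / 2) := by
  have hw_pos : ∀ t ∈ Ioo 0 r, 0 < (1 - t ^ 2) / t := fun t ht =>
    div_pos (by nlinarith [ht.1, ht.2]) ht.1
  have hbound := enorm_sub_sq_le_lintegral_deriv_sq_mul
    (hh.mono (Icc_subset_Icc le_rfl hr1.le)) hr0 (by fun_prop) hw_pos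
  rw [h0, sub_zero, ← restrict_Ioo_eq_restrict_Icc] at hbound
  refine hbound.trans (mul_le_mul' ?_ (le_of_eq ?_))
  · calc ∫⁻ t in Ioo 0 r, ‖deriv h t‖ₑ ^ 2 * ENNReal.ofReal ((1 - t ^ 2) / t)
        = ∫⁻ t in Ioo 0 r,
            ENNReal.ofReal (‖derivWithin h (Icc 0 1) t‖ ^ 2 * ((1 - t ^ 2) / t)) := by
          refine setLIntegral_congr_fun measurableSet_Ioo fun t ht => ?_
          rw [derivWithin_of_mem_nhds (Icc_mem_nhds ht.1 (ht.2.trans hr1)),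
            ENNReal.ofReal_mul (by positivity), ENNReal.ofReal_pow (norm_nonneg _),
            ofReal_norm]
      _ ≤ _ := lintegral_mono_set (Ioo_subset_Ioo_right hr1.le)
  · rw [← lintegral_Ioo_div_one_sub_sq hr0 hr1]
    simp_rw [inv_div]

theorem ofReal_norm_sq_mul_le_lintegral_mul_inv_sqrt {g : ℝ → ℂ}
    (hg : ContDiffOn ℝ 1 g (Icc 0 1)) (hg0 : g 0 = 0) {r : ℝ} (hr0 : 0 < r) (hr1 : r < 1) :
    ENNReal.ofReal (‖g r‖ ^ 2 * r) ≤
      (∫⁻ t in Ioo 0 1, ENNReal.ofReal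
        (‖derivWithin (fun s : ℝ => (s : ℂ) * g s) (Icc 0 1) t‖ ^ 2 * ((1 - t ^ 2) / t))) *
        ENNReal.ofReal (√(1 - r))⁻¹ := by
  have hhardy := enorm_sq_le_lintegral_mul_neg_log (h := fun s : ℝ => (s : ℂ) * g s)
    (Complex.ofRealCLM.contDiff.contDiffOn.mul hg) (by simp [hg0]) hr0.le hr1
  have hnorm : ‖g r‖ ^ 2 * r = ‖(r : ℂ) * g r‖ ^ 2 * r⁻¹ := by
    rw [norm_mul, Complex.norm_real, Real.norm_of_nonneg hr0.le]
    field_simp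
  calc ENNReal.ofReal (‖g r‖ ^ 2 * r)
      = ‖(r : ℂ) * g r‖ₑ ^ 2 * ENNReal.ofReal r⁻¹ := by
        rw [hnorm, ENNReal.ofReal_mul (by positivity), ENNReal.ofReal_pow (norm_nonneg _),
          ofReal_norm]
    _ ≤ _ * ENNReal.ofReal (-Real.log (1 - r ^ 2) / 2) * ENNReal.ofReal r⁻¹ := by gcongr
    _ = _ * ENNReal.ofReal (-Real.log (1 - r ^ 2) / 2 / r) := by
        rw [mul_assoc, ← ENNReal.ofReal_mul' (by positivity), ← div_eq_mul_inv]
    _ ≤ _ := by gcongr; exact neg_log_one_sub_sq_div_le hr0 hr1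

/-- There is a universal constant `C > 0` such that for every C¹ function `g`
on `[0,1]` with `g(0) = 0`,
`∫₀¹ |g|² r dr ≤ C ∫₀¹ |(rg)'|² (1 − r²)/r dr`. -/
theorem stmt4 :
    ∃ C : ℝ, 0 < C ∧ ∀ g : ℝ → ℂ, ContDiffOn ℝ 1 g (Icc (0:ℝ) 1) → g 0 = 0 →
      (∫⁻ r in Ioo (0:ℝ) 1, ENNReal.ofReal (‖g r‖ ^ 2 * r)) ≤
        ENNReal.ofReal C *
          ∫⁻ r in Ioo (0:ℝ) 1,
            ENNReal.ofReal
              (‖derivWithin (fun s : ℝ => (s : ℂ) * g s) (Icc (0:ℝ) 1) r‖ ^ 2 * ((1 - r ^ 2) / r)) := by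
  refine ⟨2, two_pos, fun g hg hg0 => ?_⟩
  calc ∫⁻ r in Ioo (0 : ℝ) 1, ENNReal.ofReal (‖g r‖ ^ 2 * r)
      ≤ ∫⁻ r in Ioo (0 : ℝ) 1, _ * ENNReal.ofReal (√(1 - r))⁻¹ :=
        setLIntegral_mono' measurableSet_Ioo fun r hr =>
          ofReal_norm_sq_mul_le_lintegral_mul_inv_sqrt hg hg0 hr.1 hr.2
    _ = ENNReal.ofReal 2 * _ := by
        rw [lintegral_const_mul _ (by fun_prop), lintegral_Ioo_inv_sqrt_one_sub, mul_comm,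
          ENNReal.ofReal_ofNat]
end

section
/- There exists a constant C > 0 such that for every C² function g on [0,1], ∫₀¹ |g|² r dr ≤ C (∫₀¹ (1−r²)|g|² r dr)^{2/3} (∫₀¹ |(rg)'|² (1/r) dr)^{1/3} + C ∫₀¹ (1−r²)|g|² r dr. -/
/-!
Write `h r = r * g r`. On `(0, 1)` we have `‖g‖² r ≤ (1 - r²) ‖g‖² r + ‖h‖²`,
`(1 - r) ‖h‖² ≤ (1 - r²) ‖g‖² r` and `‖h'‖² ≤ ‖h'‖² / r`, so it suffices to bound `∫ ‖h‖²` by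
`A = ∫ (1 - r) ‖h‖²` and `B = ∫ ‖h'‖²`. Fix `δ ≤ 1/2`. For `r ≤ 1 - δ` the weight `1 - r` is at
least `δ`, so `∫₀^{1-δ} ‖h‖² ≤ A / δ`. Some point `s ∈ [1 - 2δ, 1 - δ]` has `δ² ‖h s‖² ≤ A`; from
there the fundamental theorem of calculus and Cauchy–Schwarz give `‖h r‖² ≤ 2A / δ² + 4δB` on the
boundary layer `(1 - δ, 1)`. Altogether `∫ ‖g‖² r ≤ A + 3A / δ + 4δ² B`, and `δ = (A / B)^{1/3}`
gives the claim with `C = 15`.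
-/

open MeasureTheory Set

theorem sq_intervalIntegral_le_mul {f : ℝ → ℝ} {a b : ℝ} (hab : a ≤ b)
    (hf : IntervalIntegrable f volume a b)
    (hf2 : IntervalIntegrable (fun t => f t ^ 2) volume a b) :
    (∫ t in a..b, f t) ^ 2 ≤ (b - a) * ∫ t in a..b, f t ^ 2 := by
  rcases hab.eq_or_lt with rfl | hab
  · simp
  set I := ∫ t in a..b, f t
  set J := ∫ t in a..b, f t ^ 2
  have expand : ∫ t in a..b, ((b - a) * f t - I) ^ 2 = (b - a) * ((b - a) * J - I ^ 2) := by
    calc ∫ t in a..b, ((b - a) * f t - I) ^ 2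
        = ∫ t in a..b, ((b - a) ^ 2 * f t ^ 2 - 2 * (b - a) * I * f t + I ^ 2) := by
          congr 1; funext t; ring
      _ = (b - a) * ((b - a) * J - I ^ 2) := by
          rw [intervalIntegral.integral_add ((hf2.const_mul _).sub (hf.const_mul _))
              intervalIntegrable_const, intervalIntegral.integral_sub (hf2.const_mul _)
              (hf.const_mul _), intervalIntegral.integral_const_mul,
            intervalIntegral.integral_const_mul, intervalIntegral.integral_const, smul_eq_mul]
          ring
  have hnonneg : 0 ≤ ∫ t in a..b, ((b - a) * f t - I) ^ 2 :=
    intervalIntegral.integral_nonneg hab.le fun t _ => sq_nonneg _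
  rw [expand] at hnonneg
  nlinarith [(mul_nonneg_iff_of_pos_left (sub_pos.mpr hab)).mp hnonneg]

theorem norm_sub_sq_le_mul_integral {E : Type*} [NormedAddCommGroup E] [NormedSpace ℝ E]
    [CompleteSpace E] {f f' : ℝ → E} {a b : ℝ} (hab : a ≤ b) (hf : ContinuousOn f (Icc a b))
    (hff' : ∀ t ∈ Ioo a b, HasDerivAt f (f' t) t) (hf' : ContinuousOn f' (Icc a b)) :
    ‖f b - f a‖ ^ 2 ≤ (b - a) * ∫ t in a..b, ‖f' t‖ ^ 2 := by
  have hint : IntervalIntegrable f' volume a b := hf'.intervalIntegrable_of_Icc hab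
  rw [← intervalIntegral.integral_eq_sub_of_hasDerivAt_of_le hab hf hff' hint]
  calc ‖∫ t in a..b, f' t‖ ^ 2 ≤ (∫ t in a..b, ‖f' t‖) ^ 2 := by
        gcongr
        exact intervalIntegral.norm_integral_le_integral_norm hab
    _ ≤ (b - a) * ∫ t in a..b, ‖f' t‖ ^ 2 :=
        sq_intervalIntegral_le_mul hab hint.norm ((hf'.norm.pow 2).intervalIntegrable_of_Icc hab)

theorem setIntegral_le_setIntegral_of_subset {α : Type*} [MeasurableSpace α] {μ : Measure α}
    {f g : α → ℝ} {s t : Set α} (hs : MeasurableSet s) (ht : MeasurableSet t) (hst : s ⊆ t)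
    (hf : IntegrableOn f s μ) (hg : IntegrableOn g t μ) (hfg : ∀ x ∈ s, f x ≤ g x)
    (hg0 : ∀ x ∈ t, 0 ≤ g x) :
    ∫ x in s, f x ∂μ ≤ ∫ x in t, g x ∂μ :=
  (setIntegral_mono_on hf (hg.mono_set hst) hs hfg).trans
    (setIntegral_mono_set hg (ae_restrict_of_forall_mem ht hg0) hst.eventuallyLE)

theorem le_of_forall_le_cube_add_div_add_mul_sq_cube {x y L : ℝ} (hx : 0 < x) (hy : 0 ≤ y)
    (h : ∀ δ, 0 < δ → δ ≤ 1 / 2 → L ≤ x ^ 3 + 3 * x ^ 3 / δ + 4 * δ ^ 2 * y ^ 3) :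
    L ≤ 15 * x ^ 2 * y + 15 * x ^ 3 := by
  rcases le_or_gt y (2 * x) with hyx | hxy
  · have hL := h (1 / 2) (by norm_num) le_rfl
    nlinarith [pow_le_pow_left₀ hy hyx 3, mul_nonneg (sq_nonneg x) hy]
  · have hy0 : 0 < y := by linarith
    have hL := h (x / y) (by positivity) (by rw [div_le_iff₀ hy0]; linarith)
    have hval : x ^ 3 + 3 * x ^ 3 / (x / y) + 4 * (x / y) ^ 2 * y ^ 3 = x ^ 3 + 7 * x ^ 2 * y := by
      field_simp; ring
    rw [hval] at hL
    nlinarith [mul_pos (sq_pos_of_pos hx) hy0, pow_pos hx 3]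

theorem le_of_forall_le_add_div_add_mul_sq {a b L : ℝ} (ha : 0 < a) (hb : 0 ≤ b)
    (h : ∀ δ, 0 < δ → δ ≤ 1 / 2 → L ≤ a + 3 * a / δ + 4 * δ ^ 2 * b) :
    L ≤ 15 * a ^ ((2 : ℝ) / 3) * b ^ ((1 : ℝ) / 3) + 15 * a := by
  have cube {c : ℝ} (hc : 0 ≤ c) : (c ^ ((1 : ℝ) / 3)) ^ 3 = c := by
    rw [← Real.rpow_natCast, ← Real.rpow_mul hc]; norm_num
  have h23 : a ^ ((2 : ℝ) / 3) = (a ^ ((1 : ℝ) / 3)) ^ 2 := by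
    rw [← Real.rpow_natCast, ← Real.rpow_mul ha.le]; norm_num
  have key := le_of_forall_le_cube_add_div_add_mul_sq_cube (x := a ^ ((1 : ℝ) / 3))
    (y := b ^ ((1 : ℝ) / 3)) (by positivity) (by positivity)
    (by simpa only [cube ha.le, cube hb] using h)
  calc L ≤ _ := key
    _ = _ := by rw [h23, cube ha.le]

section BoundaryLayer

variable {E : Type*} [NormedAddCommGroup E] {h : ℝ → E} {a : ℝ → ℝ} {δ : ℝ}

theorem mul_setIntegral_norm_sq_le (hh : ContinuousOn h (Icc 0 1))
    (ha : ∀ r ∈ Ioo (0 : ℝ) 1, (1 - r) * ‖h r‖ ^ 2 ≤ a r) (ha_int : IntegrableOn a (Ioo 0 1))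
    {s : Set ℝ} (hs : MeasurableSet s) (hs_sub : s ⊆ Ioc 0 (1 - δ)) (hδ : 0 < δ) :
    δ * ∫ r in s, ‖h r‖ ^ 2 ≤ ∫ r in Ioo 0 1, a r := by
  have hsub : s ⊆ Ioo 0 1 := fun r hr => ⟨(hs_sub hr).1, by linarith [(hs_sub hr).2]⟩
  rw [← integral_const_mul]
  refine setIntegral_le_setIntegral_of_subset hs measurableSet_Ioo hsub
    (((hh.norm.pow 2).integrableOn_Icc.mono_set (hsub.trans Ioo_subset_Icc_self)).const_mul δ)
    ha_int (fun r hr => ?_) (fun r hr => ?_)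
  · refine le_trans ?_ (ha r (hsub hr))
    gcongr
    linarith [(hs_sub hr).2]
  · exact le_trans (mul_nonneg (by linarith [hr.2]) (sq_nonneg _)) (ha r hr)

theorem exists_mem_Ioc_sq_mul_norm_sq_le (hh : ContinuousOn h (Icc 0 1))
    (ha : ∀ r ∈ Ioo (0 : ℝ) 1, (1 - r) * ‖h r‖ ^ 2 ≤ a r) (ha_int : IntegrableOn a (Ioo 0 1))
    (hδ : 0 < δ) (hδ' : δ ≤ 1 / 2) :
    ∃ s ∈ Ioc (1 - 2 * δ) (1 - δ), δ ^ 2 * ‖h s‖ ^ 2 ≤ ∫ r in Ioo 0 1, a r := by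
  have hsub : Ioc (1 - 2 * δ) (1 - δ) ⊆ Ioc 0 (1 - δ) := Ioc_subset_Ioc_left (by linarith)
  have hvol : volume.real (Ioc (1 - 2 * δ) (1 - δ)) = δ := by
    rw [Real.volume_real_Ioc_of_le (by linarith)]; ring
  obtain ⟨s, hs, hs_le⟩ := exists_le_setAverage (μ := volume) (f := fun r => ‖h r‖ ^ 2)
    (by simp; linarith) (by simp)
    ((hh.norm.pow 2).integrableOn_Icc.mono_set
      (hsub.trans (Ioc_subset_Icc_self.trans (Icc_subset_Icc_right (by linarith)))))
  refine ⟨s, hs, ?_⟩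
  rw [setAverage_eq, hvol, smul_eq_mul] at hs_le
  calc δ ^ 2 * ‖h s‖ ^ 2 ≤ δ ^ 2 * (δ⁻¹ * ∫ r in Ioc (1 - 2 * δ) (1 - δ), ‖h r‖ ^ 2) := by
        gcongr
    _ = δ * ∫ r in Ioc (1 - 2 * δ) (1 - δ), ‖h r‖ ^ 2 := by field_simp
    _ ≤ ∫ r in Ioo 0 1, a r :=
        mul_setIntegral_norm_sq_le hh ha ha_int measurableSet_Ioc hsub hδ

theorem norm_sq_le_of_mem_Ioo [NormedSpace ℝ E] [CompleteSpace E] {b : ℝ → ℝ}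
    (hh : ContDiffOn ℝ 1 h (Icc 0 1))
    (ha : ∀ r ∈ Ioo (0 : ℝ) 1, (1 - r) * ‖h r‖ ^ 2 ≤ a r) (ha_int : IntegrableOn a (Ioo 0 1))
    (hb : ∀ r ∈ Ioo (0 : ℝ) 1, ‖derivWithin h (Icc 0 1) r‖ ^ 2 ≤ b r)
    (hb_int : IntegrableOn b (Ioo 0 1)) (hδ : 0 < δ) (hδ' : δ ≤ 1 / 2) {r : ℝ}
    (hr : r ∈ Ioo (1 - δ) 1) :
    ‖h r‖ ^ 2 ≤ 2 * (∫ t in Ioo 0 1, a t) / δ ^ 2 + 4 * δ * ∫ t in Ioo 0 1, b t := by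
  obtain ⟨s, hs, hs_le⟩ :=
    exists_mem_Ioc_sq_mul_norm_sq_le hh.continuousOn ha ha_int hδ hδ'
  have hsr : s ≤ r := by linarith [hs.2, hr.1]
  have hIoc : Ioc s r ⊆ Ioo 0 1 := fun t ht => ⟨by linarith [hs.1, ht.1], by linarith [ht.2, hr.2]⟩
  have hIcc : Icc s r ⊆ Icc 0 1 := Icc_subset_Icc (by linarith [hs.1]) hr.2.le
  have hderiv : ContinuousOn (derivWithin h (Icc 0 1)) (Icc 0 1) :=
    hh.continuousOn_derivWithin (uniqueDiffOn_Icc one_pos) le_rfl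
  have hIoo : Ioo s r ⊆ Ioo 0 1 := Ioo_subset_Ioc_self.trans hIoc
  have hincr := norm_sub_sq_le_mul_integral hsr (hh.continuousOn.mono hIcc)
    (fun t ht => (hh.differentiableOn one_ne_zero t (Ioo_subset_Icc_self (hIoo ht)))
      |>.hasDerivWithinAt.hasDerivAt (Icc_mem_nhds (hIoo ht).1 (hIoo ht).2))
    (hderiv.mono hIcc)
  have henergy : ∫ t in s..r, ‖derivWithin h (Icc 0 1) t‖ ^ 2 ≤ ∫ t in Ioo 0 1, b t := by
    rw [intervalIntegral.integral_of_le hsr]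
    exact setIntegral_le_setIntegral_of_subset measurableSet_Ioc measurableSet_Ioo hIoc
      ((hderiv.norm.pow 2).integrableOn_Icc.mono_set (Ioc_subset_Icc_self.trans hIcc)) hb_int
      (fun t ht => hb t (hIoc ht)) (fun t ht => (sq_nonneg _).trans (hb t ht))
  have hs_sq : ‖h s‖ ^ 2 ≤ (∫ t in Ioo 0 1, a t) / δ ^ 2 := by
    rw [le_div_iff₀ (by positivity)]; linarith
  have htriangle : ‖h r‖ ≤ ‖h s‖ + ‖h r - h s‖ := norm_le_norm_add_norm_sub' _ _
  calc ‖h r‖ ^ 2 ≤ 2 * ‖h s‖ ^ 2 + 2 * ‖h r - h s‖ ^ 2 := by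
        nlinarith [sq_nonneg (‖h s‖ - ‖h r - h s‖), norm_nonneg (h r)]
    _ ≤ 2 * ((∫ t in Ioo 0 1, a t) / δ ^ 2) + 2 * ((2 * δ) * ∫ t in Ioo 0 1, b t) := by
        gcongr
        refine hincr.trans (mul_le_mul (by linarith [hs.1, hr.2]) henergy ?_ (by linarith))
        exact intervalIntegral.integral_nonneg hsr fun t _ => sq_nonneg _
    _ = _ := by ring

theorem integral_Ioo_norm_sq_le [NormedSpace ℝ E] [CompleteSpace E] {b : ℝ → ℝ}
    (hh : ContDiffOn ℝ 1 h (Icc 0 1))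
    (ha : ∀ r ∈ Ioo (0 : ℝ) 1, (1 - r) * ‖h r‖ ^ 2 ≤ a r) (ha_int : IntegrableOn a (Ioo 0 1))
    (hb : ∀ r ∈ Ioo (0 : ℝ) 1, ‖derivWithin h (Icc 0 1) r‖ ^ 2 ≤ b r)
    (hb_int : IntegrableOn b (Ioo 0 1)) (hδ : 0 < δ) (hδ' : δ ≤ 1 / 2) :
    ∫ r in Ioo 0 1, ‖h r‖ ^ 2 ≤
      3 * (∫ r in Ioo 0 1, a r) / δ + 4 * δ ^ 2 * ∫ r in Ioo 0 1, b r := by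
  set A := ∫ r in Ioo 0 1, a r
  set B := ∫ r in Ioo 0 1, b r
  have hsplit : Ioc 0 (1 - δ) ∪ Ioo (1 - δ) 1 = Ioo (0 : ℝ) 1 :=
    Ioc_union_Ioo_eq_Ioo (by linarith) (by linarith)
  have hint : IntegrableOn (fun r => ‖h r‖ ^ 2) (Ioc 0 (1 - δ) ∪ Ioo (1 - δ) 1) :=
    (hh.continuousOn.norm.pow 2).integrableOn_Icc.mono_set
      (hsplit.subset.trans Ioo_subset_Icc_self)
  have hinner : δ * ∫ r in Ioc 0 (1 - δ), ‖h r‖ ^ 2 ≤ A :=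
    mul_setIntegral_norm_sq_le hh.continuousOn ha ha_int measurableSet_Ioc subset_rfl hδ
  have houter : ∫ r in Ioo (1 - δ) 1, ‖h r‖ ^ 2 ≤ δ * (2 * A / δ ^ 2 + 4 * δ * B) := by
    calc ∫ r in Ioo (1 - δ) 1, ‖h r‖ ^ 2 ≤ ∫ _ in Ioo (1 - δ) 1, (2 * A / δ ^ 2 + 4 * δ * B) :=
          setIntegral_mono_on (hint.mono_set subset_union_right) (integrableOn_const (by simp))
            measurableSet_Ioo fun r hr => norm_sq_le_of_mem_Ioo hh ha ha_int hb hb_int hδ hδ' hr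
      _ = δ * (2 * A / δ ^ 2 + 4 * δ * B) := by
          rw [setIntegral_const, Real.volume_real_Ioo_of_le (by linarith), smul_eq_mul]; ring
  rw [← hsplit, setIntegral_union (Ioc_disjoint_Ioi_same.mono_right Ioo_subset_Ioi_self)
    measurableSet_Ioo (hint.mono_set subset_union_left) (hint.mono_set subset_union_right)]
  have hinner' : ∫ r in Ioc 0 (1 - δ), ‖h r‖ ^ 2 ≤ A / δ := by
    rw [le_div_iff₀ hδ]; linarith
  calc _ ≤ A / δ + δ * (2 * A / δ ^ 2 + 4 * δ * B) := add_le_add hinner' houter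
    _ = 3 * A / δ + 4 * δ ^ 2 * B := by field_simp; ring

end BoundaryLayer

section RadialWeights

variable {g : ℝ → ℂ}

theorem ContDiffOn.ofReal_mul {n : WithTop ℕ∞} {s : Set ℝ} (hg : ContDiffOn ℝ n g s) :
    ContDiffOn ℝ n (fun r : ℝ => (r : ℂ) * g r) s :=
  Complex.ofRealCLM.contDiff.contDiffOn.mul hg

theorem integrableOn_norm_sq_mul (hg : ContinuousOn g (Icc 0 1)) :
    IntegrableOn (fun r => ‖g r‖ ^ 2 * r) (Ioo 0 1) :=
  ((hg.norm.pow 2).mul continuousOn_id).integrableOn_Icc.mono_set Ioo_subset_Icc_self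

theorem integrableOn_one_sub_sq_mul_norm_sq_mul (hg : ContinuousOn g (Icc 0 1)) :
    IntegrableOn (fun r => (1 - r ^ 2) * ‖g r‖ ^ 2 * r) (Ioo 0 1) :=
  (((continuousOn_const.sub (continuousOn_pow 2)).mul (hg.norm.pow 2)).mul
    continuousOn_id).integrableOn_Icc.mono_set Ioo_subset_Icc_self

theorem one_sub_sq_mul_norm_sq_mul_nonneg {r : ℝ} (hr : r ∈ Ioo (0 : ℝ) 1) :
    0 ≤ (1 - r ^ 2) * ‖g r‖ ^ 2 * r := by
  have : 0 ≤ 1 - r ^ 2 := by nlinarith [hr.1, hr.2]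
  have := hr.1.le
  positivity

theorem integral_norm_sq_mul_eq_zero (hg : ContinuousOn g (Icc 0 1))
    (hA : ∫ r in Ioo 0 1, (1 - r ^ 2) * ‖g r‖ ^ 2 * r = 0) :
    ∫ r in Ioo 0 1, ‖g r‖ ^ 2 * r = 0 := by
  have hzero := (integral_eq_zero_iff_of_nonneg_ae
    (ae_restrict_of_forall_mem measurableSet_Ioo fun r hr => one_sub_sq_mul_norm_sq_mul_nonneg hr)
    (integrableOn_one_sub_sq_mul_norm_sq_mul hg)).mp hA
  refine integral_eq_zero_of_ae ?_
  filter_upwards [hzero, ae_restrict_mem measurableSet_Ioo] with r hr hr_mem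
  have hpos : 0 < 1 - r ^ 2 := by nlinarith [hr_mem.1, hr_mem.2]
  simpa [mul_assoc, hpos.ne'] using hr

theorem integral_norm_sq_mul_le (hg : ContDiffOn ℝ 1 g (Icc 0 1))
    (hB : IntegrableOn
      (fun r => ‖derivWithin (fun s : ℝ => (s : ℂ) * g s) (Icc 0 1) r‖ ^ 2 / r) (Ioo 0 1))
    {δ : ℝ} (hδ : 0 < δ) (hδ' : δ ≤ 1 / 2) :
    ∫ r in Ioo 0 1, ‖g r‖ ^ 2 * r ≤
      (∫ r in Ioo 0 1, (1 - r ^ 2) * ‖g r‖ ^ 2 * r)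
        + 3 * (∫ r in Ioo 0 1, (1 - r ^ 2) * ‖g r‖ ^ 2 * r) / δ
        + 4 * δ ^ 2 *
          ∫ r in Ioo 0 1, ‖derivWithin (fun s : ℝ => (s : ℂ) * g s) (Icc 0 1) r‖ ^ 2 / r := by
  set h : ℝ → ℂ := fun s => (s : ℂ) * g s
  have hh : ContDiffOn ℝ 1 h (Icc 0 1) := hg.ofReal_mul
  have hnorm (r : ℝ) (hr : 0 ≤ r) : ‖h r‖ ^ 2 = r ^ 2 * ‖g r‖ ^ 2 := by
    simp only [h, norm_mul, Complex.norm_real, Real.norm_of_nonneg hr, mul_pow]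
  have hcore := integral_Ioo_norm_sq_le hh (a := fun r => (1 - r ^ 2) * ‖g r‖ ^ 2 * r)
    (fun r hr => by
      rw [hnorm r hr.1.le]
      nlinarith [mul_nonneg (mul_nonneg (sub_nonneg.mpr hr.2.le) hr.1.le) (sq_nonneg ‖g r‖)])
    (integrableOn_one_sub_sq_mul_norm_sq_mul hg.continuousOn)
    (fun r hr => le_div_self (sq_nonneg _) hr.1 hr.2.le) hB hδ hδ'
  have hh_int : IntegrableOn (fun r => ‖h r‖ ^ 2) (Ioo 0 1) :=
    (hh.continuousOn.norm.pow 2).integrableOn_Icc.mono_set Ioo_subset_Icc_self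
  have hsplit : ∫ r in Ioo 0 1, ‖g r‖ ^ 2 * r ≤
      (∫ r in Ioo 0 1, (1 - r ^ 2) * ‖g r‖ ^ 2 * r) + ∫ r in Ioo 0 1, ‖h r‖ ^ 2 := by
    rw [← integral_add (integrableOn_one_sub_sq_mul_norm_sq_mul hg.continuousOn) hh_int]
    refine setIntegral_mono_on (integrableOn_norm_sq_mul hg.continuousOn)
      ((integrableOn_one_sub_sq_mul_norm_sq_mul hg.continuousOn).add hh_int)
      measurableSet_Ioo fun r hr => ?_
    rw [hnorm r hr.1.le]
    nlinarith [mul_nonneg (mul_nonneg (sub_nonneg.mpr hr.2.le) (sq_nonneg r)) (sq_nonneg ‖g r‖)]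
  linarith

theorem integrableOn_norm_derivWithin_sq_div (hg : ContDiffOn ℝ 1 g (Icc 0 1))
    (hB : ∫⁻ r in Ioo (0 : ℝ) 1,
      ENNReal.ofReal (‖derivWithin (fun s : ℝ => (s : ℂ) * g s) (Icc 0 1) r‖ ^ 2 / r) ≠ ⊤) :
    IntegrableOn
      (fun r => ‖derivWithin (fun s : ℝ => (s : ℂ) * g s) (Icc 0 1) r‖ ^ 2 / r) (Ioo 0 1) := by
  have hcont : ContinuousOn
      (fun r => ‖derivWithin (fun s : ℝ => (s : ℂ) * g s) (Icc 0 1) r‖ ^ 2 / r) (Ioo 0 1) :=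
    ((hg.ofReal_mul.continuousOn_derivWithin (uniqueDiffOn_Icc one_pos) le_rfl).mono
      Ioo_subset_Icc_self).norm.pow 2 |>.div continuousOn_id fun r hr => hr.1.ne'
  exact ⟨hcont.aestronglyMeasurable measurableSet_Ioo,
    (hasFiniteIntegral_iff_ofReal (ae_restrict_of_forall_mem measurableSet_Ioo
      fun r hr => div_nonneg (sq_nonneg _) hr.1.le)).mpr hB.lt_top⟩

end RadialWeights

/-- Weighted interpolation inequality: there is a universal `C > 0` such that
for every C² function `g` on `[0,1]`,
`∫₀¹ |g|² r ≤ C (∫₀¹ (1−r²)|g|² r)^{2/3} (∫₀¹ |(rg)'|²/r)^{1/3} + C ∫₀¹ (1−r²)|g|² r`. -/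
theorem stmt5 :
    ∃ C : ℝ, 0 < C ∧ ∀ g : ℝ → ℂ, ContDiffOn ℝ 2 g (Icc (0:ℝ) 1) →
      (∫⁻ r in Ioo (0:ℝ) 1, ENNReal.ofReal (‖g r‖ ^ 2 * r)) ≤
        ENNReal.ofReal C *
            (∫⁻ r in Ioo (0:ℝ) 1, ENNReal.ofReal ((1 - r ^ 2) * ‖g r‖ ^ 2 * r)) ^ ((2 : ℝ) / 3) *
            (∫⁻ r in Ioo (0:ℝ) 1,
                ENNReal.ofReal
                  (‖derivWithin (fun s : ℝ => (s : ℂ) * g s) (Icc (0:ℝ) 1) r‖ ^ 2 / r)) ^ ((1 : ℝ) / 3)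
          + ENNReal.ofReal C *
              ∫⁻ r in Ioo (0:ℝ) 1, ENNReal.ofReal ((1 - r ^ 2) * ‖g r‖ ^ 2 * r) := by
  refine ⟨15, by norm_num, fun g hg => ?_⟩
  have hg1 : ContDiffOn ℝ 1 g (Icc 0 1) := hg.of_le (by norm_num)
  set h' := derivWithin (fun s : ℝ => (s : ℂ) * g s) (Icc 0 1)
  have hL_nonneg : 0 ≤ᵐ[volume.restrict (Ioo 0 1)] fun r => ‖g r‖ ^ 2 * r :=
    ae_restrict_of_forall_mem measurableSet_Ioo fun r hr => by have := hr.1.le; positivity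
  have hA_nonneg : 0 ≤ᵐ[volume.restrict (Ioo 0 1)] fun r => (1 - r ^ 2) * ‖g r‖ ^ 2 * r :=
    ae_restrict_of_forall_mem measurableSet_Ioo fun r hr => one_sub_sq_mul_norm_sq_mul_nonneg hr
  have hB_nonneg : 0 ≤ᵐ[volume.restrict (Ioo 0 1)] fun r => ‖h' r‖ ^ 2 / r :=
    ae_restrict_of_forall_mem measurableSet_Ioo fun r hr => div_nonneg (sq_nonneg _) hr.1.le
  rw [← ofReal_integral_eq_lintegral_ofReal (integrableOn_norm_sq_mul hg1.continuousOn)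
      hL_nonneg, ← ofReal_integral_eq_lintegral_ofReal
      (integrableOn_one_sub_sq_mul_norm_sq_mul hg1.continuousOn) hA_nonneg]
  rcases (integral_nonneg_of_ae hA_nonneg).eq_or_lt with hA | hA
  · simp [integral_norm_sq_mul_eq_zero hg1.continuousOn hA.symm]
  rcases eq_or_ne (∫⁻ r in Ioo (0 : ℝ) 1, ENNReal.ofReal (‖h' r‖ ^ 2 / r)) ⊤ with hB | hB
  · simp [hB, hA]
  have hB_int := integrableOn_norm_derivWithin_sq_div hg1 hB
  rw [← ofReal_integral_eq_lintegral_ofReal hB_int hB_nonneg]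
  have hB0 := integral_nonneg_of_ae hB_nonneg
  have key := le_of_forall_le_add_div_add_mul_sq hA hB0
    fun δ hδ hδ' => integral_norm_sq_mul_le hg1 hB_int hδ hδ'
  calc _ ≤ ENNReal.ofReal (15 * _ ^ ((2 : ℝ) / 3) * _ ^ ((1 : ℝ) / 3) + 15 * _) :=
        ENNReal.ofReal_le_ofReal key
    _ = _ := by
        rw [ENNReal.ofReal_add (by positivity [Real.rpow_nonneg hA.le, Real.rpow_nonneg hB0])
            (mul_nonneg (by norm_num) hA.le),
          ENNReal.ofReal_mul (by positivity [Real.rpow_nonneg hA.le]),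
          ENNReal.ofReal_mul (by norm_num), ENNReal.ofReal_mul (by norm_num),
          ENNReal.ofReal_rpow_of_nonneg hA.le (by norm_num),
          ENNReal.ofReal_rpow_of_nonneg hB0 (by norm_num)]
end

section
/- Let ξ ∈ ℝ, Φ ≥ 0, α ≥ 0, and Ū(r) as in the Poiseuille profile. Suppose ψ : [0,1] → ℂ is smooth and satisfies the boundary conditions ψ(0) = ψ(1) = 0, (Lψ)(0) = 0, (Lψ)(1) = −α ψ'(1), where L g = g'' + g'/r − g/r². Then ∫₀¹ ((L − ξ²)² ψ) · conj(ψ) r dr = ∫₀¹ |Lψ|² r dr + α |(d/dr)(r ψ)(1)|² + 2ξ² ∫₀¹ |(rψ)'|² (1/r) dr + ξ⁴ ∫₀¹ |ψ|² r dr. -/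
open MeasureTheory intervalIntegral

lemma paramHasDeriv (F F' : ℝ → ℝ → ℂ)
    (hF : Continuous fun p : ℝ × ℝ => F p.1 p.2)
    (hF' : Continuous fun p : ℝ × ℝ => F' p.1 p.2)
    (hd : ∀ x t, HasDerivAt (fun y => F y t) (F' x t) x) (x₀ : ℝ) :
    HasDerivAt (fun x => ∫ t in (0:ℝ)..1, F x t) (∫ t in (0:ℝ)..1, F' x₀ t) x₀ := by
  have hK : IsCompact ((Set.Icc (x₀ - 1) (x₀ + 1)) ×ˢ (Set.Icc (0:ℝ) 1)) :=
    (isCompact_Icc).prod isCompact_Icc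
  obtain ⟨C, hC⟩ := hK.exists_bound_of_continuousOn hF'.continuousOn
  have key := intervalIntegral.hasDerivAt_integral_of_dominated_loc_of_deriv_le
    (F := F) (F' := F') (x₀ := x₀) (a := (0:ℝ)) (b := 1) (μ := volume)
    (bound := fun _ => C) (s := Metric.ball x₀ 1) (Metric.ball_mem_nhds x₀ one_pos)
    (Filter.Eventually.of_forall fun x =>
      ((hF.comp (Continuous.prodMk_right x)).aestronglyMeasurable))
    ((hF.comp (Continuous.prodMk_right x₀)).intervalIntegrable _ _)
    ((hF'.comp (Continuous.prodMk_right x₀)).aestronglyMeasurable)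
    (Filter.Eventually.of_forall fun t ht x hx => by
      refine hC (x, t) ⟨?_, ?_⟩
      · have := Metric.mem_ball.mp hx
        rw [Real.dist_eq] at this
        constructor <;> [linarith [abs_lt.mp this]; linarith [(abs_lt.mp this).2]]
      · rw [Set.uIoc_of_le (by norm_num : (0:ℝ) ≤ 1)] at ht
        exact ⟨le_of_lt ht.1, ht.2⟩)
    (intervalIntegrable_const)
    (Filter.Eventually.of_forall fun t _ x _ => hd x t)
  exact key.2

lemma hadamard {f : ℝ → ℂ} (hf : ContDiff ℝ (⊤ : ℕ∞) f) (h0 : f 0 = 0) :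
    ∃ g : ℝ → ℂ, ContDiff ℝ (⊤ : ℕ∞) g ∧ ∀ r, f r = r * g r := by
  set G : ℕ → ℝ → ℂ := fun k x => ∫ t in (0:ℝ)..1, ((t:ℂ)) ^ k * iteratedDeriv (k+1) f (x * t)
    with hG
  have hitd : ∀ m : ℕ, Continuous (iteratedDeriv m f) := fun m =>
    hf.continuous_iteratedDeriv m (by exact_mod_cast le_top)
  have hitdd : ∀ (m : ℕ) (y : ℝ), HasDerivAt (iteratedDeriv m f)
      (iteratedDeriv (m+1) f y) y := by
    intro m y
    have hdiff : Differentiable ℝ (iteratedDeriv m f) :=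
      hf.differentiable_iteratedDeriv m (by exact_mod_cast WithTop.coe_lt_top m)
    have := (hdiff y).hasDerivAt
    rwa [show deriv (iteratedDeriv m f) y = iteratedDeriv (m+1) f y from
      (congrFun iteratedDeriv_succ y).symm] at this
  have hGd : ∀ (k : ℕ) (x : ℝ), HasDerivAt (G k) (G (k+1) x) x := by
    intro k x
    apply paramHasDeriv
      (F' := fun x t => ((t:ℂ)) ^ (k+1) * iteratedDeriv (k+2) f (x * t))
    · exact ((Complex.continuous_ofReal.comp continuous_snd).pow k).mul
        ((hitd (k+1)).comp (continuous_fst.mul continuous_snd))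
    · exact ((Complex.continuous_ofReal.comp continuous_snd).pow (k+1)).mul
        ((hitd (k+2)).comp (continuous_fst.mul continuous_snd))
    · intro x t
      have h1 : HasDerivAt (fun y : ℝ => y * t) t x := by
        simpa using (hasDerivAt_id x).mul_const t
      have h2 := (hitdd (k+1) (x*t)).scomp x h1
      have h3 := h2.const_mul ((t:ℂ)^k)
      refine h3.congr_deriv ?_
      push_cast
      rw [Complex.real_smul]
      ring
  have hGc : ∀ k, Continuous (G k) := fun k =>
    continuous_iff_continuousAt.mpr fun x => (hGd k x).differentiableAt.continuousAt
  have hGderiv : ∀ k, deriv (G k) = G (k+1) := fun k =>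
    funext fun x => (hGd k x).deriv
  have hGit : ∀ (m k : ℕ), iteratedDeriv m (G k) = G (k + m) := by
    intro m
    induction m with
    | zero => intro k; simp [iteratedDeriv_zero]
    | succ m ih =>
      intro k
      rw [iteratedDeriv_succ, ih k, hGderiv, Nat.add_assoc]
  refine ⟨G 0, ?_, ?_⟩
  · exact contDiff_of_differentiable_iteratedDeriv fun m _ => by
      rw [hGit m 0, Nat.zero_add]; exact fun x => (hGd m x).differentiableAt
  · intro r
    rcases eq_or_ne r 0 with hr | hr
    · simp [hr, h0]
    · have hsub : (∫ t in (0:ℝ)..1, deriv f (r * t)) = r⁻¹ • ∫ s in (r*0)..(r*1), deriv f s :=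
        intervalIntegral.integral_comp_mul_left (fun s => deriv f s) hr
      have hftc : (∫ s in (0:ℝ)..r, deriv f s) = f r - f 0 := by
        apply intervalIntegral.integral_deriv_eq_sub
        · exact fun x _ => (hf.differentiable (by simp)).differentiableAt
        · exact ((hf.continuous_deriv (by exact_mod_cast le_top)).intervalIntegrable _ _)
      have : G 0 r = ∫ t in (0:ℝ)..1, deriv f (r * t) := by
        simp [hG, iteratedDeriv_one]
      rw [this, hsub]
      simp only [mul_zero, mul_one, hftc, h0, sub_zero]
      rw [Complex.real_smul]
      push_cast
      rw [← mul_assoc, mul_inv_cancel₀ (Complex.ofReal_ne_zero.mpr hr), one_mul]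

/-- Integration-by-parts identity for the fourth-order operator `(L − ξ²)²`,
`L g = g'' + g'/r − g/r²`, under the boundary conditions
`ψ(0) = ψ(1) = 0`, `(Lψ)(0) = 0`, `(Lψ)(1) = −α ψ'(1)`:
`∫₀¹ ((L−ξ²)²ψ) conj(ψ) r dr
  = ∫₀¹ |Lψ|² r dr + α |(rψ)'(1)|² + 2ξ² ∫₀¹ |(rψ)'|²/r dr + ξ⁴ ∫₀¹ |ψ|² r dr`. -/
theorem stmt11 (ξ Φ α : ℝ) (hΦ : 0 ≤ Φ) (hα : 0 ≤ α)
    (ψ : ℝ → ℂ) (hψ : ContDiff ℝ (⊤ : ℕ∞) ψ)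
    (L : (ℝ → ℂ) → ℝ → ℂ)
    (hL : ∀ g : ℝ → ℂ, ∀ r : ℝ,
      L g r = deriv (deriv g) r + deriv g r / (r : ℂ) - g r / (r : ℂ) ^ 2)
    (h0 : ψ 0 = 0) (h1 : ψ 1 = 0) (hL0 : L ψ 0 = 0)
    (hL1 : L ψ 1 = -(α : ℂ) * deriv ψ 1) :
    (∫ r in (0:ℝ)..1,
        (L (L ψ) r - 2 * (ξ : ℂ) ^ 2 * L ψ r + (ξ : ℂ) ^ 4 * ψ r) *
          (starRingEnd ℂ) (ψ r) * (r : ℂ)) =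
      ((∫ r in (0:ℝ)..1, ‖L ψ r‖ ^ 2 * r : ℝ) : ℂ)
        + ((α * ‖deriv (fun s : ℝ => (s : ℂ) * ψ s) 1‖ ^ 2 : ℝ) : ℂ)
        + ((2 * ξ ^ 2 *
            ∫ r in (0:ℝ)..1, ‖deriv (fun s : ℝ => (s : ℂ) * ψ s) r‖ ^ 2 / r : ℝ) : ℂ)
        + ((ξ ^ 4 * ∫ r in (0:ℝ)..1, ‖ψ r‖ ^ 2 * r : ℝ) : ℂ) := by
  have hpsiT : ContDiff ℝ (⊤ : ℕ∞) ψ := hψ.of_le (by simp)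
  have hOR : ∀ r : ℝ, HasDerivAt (fun s : ℝ => (s : ℂ)) 1 r := fun r => by
    simpa using (hasDerivAt_id r).ofReal_comp
  have hderiv_step : ∀ {f : ℝ → ℂ}, ContDiff ℝ (⊤ : ℕ∞) f →
      ContDiff ℝ (⊤ : ℕ∞) (deriv f) := fun hf => (contDiff_infty_iff_deriv.mp hf).2
  -- Hadamard factorization of ψ
  obtain ⟨g, hg, hgψ⟩ := hadamard hpsiT h0
  set g₁ := deriv g with hg₁def
  set g₂ := deriv g₁ with hg₂def
  have hgd : Differentiable ℝ g := (contDiff_infty_iff_deriv.mp hg).1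
  have hg1 : ContDiff ℝ (⊤ : ℕ∞) g₁ := hderiv_step hg
  have hg1d : Differentiable ℝ g₁ := (contDiff_infty_iff_deriv.mp hg1).1
  have hg2 : ContDiff ℝ (⊤ : ℕ∞) g₂ := hderiv_step hg1
  have hDg : ∀ r, HasDerivAt g (g₁ r) r := fun r => (hgd r).hasDerivAt
  have hDg1 : ∀ r, HasDerivAt g₁ (g₂ r) r := fun r => (hg1d r).hasDerivAt
  have hψeq : ψ = fun r : ℝ => (r : ℂ) * g r := funext hgψ
  have hDψ : ∀ r, HasDerivAt ψ (g r + r * g₁ r) r := by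
    intro r
    rw [hψeq]
    have := (hOR r).mul (hDg r)
    refine this.congr_deriv ?_
    ring
  have hdψ : deriv ψ = fun r : ℝ => g r + r * g₁ r := funext fun r => (hDψ r).deriv
  have hDdψ : ∀ r, HasDerivAt (deriv ψ) (2 * g₁ r + r * g₂ r) r := by
    intro r
    rw [hdψ]
    have := (hDg r).add ((hOR r).mul (hDg1 r))
    refine this.congr_deriv ?_
    ring
  have hddψ : deriv (deriv ψ) = fun r : ℝ => 2 * g₁ r + r * g₂ r :=
    funext fun r => (hDdψ r).deriv
  -- from (Lψ)(0) = 0 : g₁ 0 = 0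
  have hg10 : g₁ 0 = 0 := by
    have h := hL0
    rw [hL ψ 0] at h
    rw [hddψ] at h
    simp only [Complex.ofReal_zero, div_zero, mul_zero, add_zero, sub_zero,
      ne_eq, zero_pow, OfNat.ofNat_ne_zero, not_false_eq_true] at h
    have h2 : (2 : ℂ) * g₁ 0 = 0 := by simpa using h
    exact (mul_eq_zero.mp h2).resolve_left (by norm_num)
  -- q = (rψ)'/r ; Dq = q' = Lψ
  set q : ℝ → ℂ := fun r => 2 * g r + r * g₁ r with hqdef
  set Dq : ℝ → ℂ := fun r => 3 * g₁ r + r * g₂ r with hDqdef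
  have hDq : ∀ r, HasDerivAt q (Dq r) r := by
    intro r
    have := ((hDg r).const_mul (2:ℂ)).add ((hOR r).mul (hDg1 r))
    refine this.congr_deriv ?_
    simp only [hDqdef]
    ring
  have hqC : ContDiff ℝ (⊤ : ℕ∞) q := by
    apply ContDiff.add
    · exact contDiff_const.mul hg
    · exact (Complex.ofRealCLM.contDiff).mul hg1
  have hDqC : ContDiff ℝ (⊤ : ℕ∞) Dq := by
    apply ContDiff.add
    · exact contDiff_const.mul hg1
    · exact (Complex.ofRealCLM.contDiff).mul hg2
  have hLψeq : L ψ = Dq := by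
    funext r
    rcases eq_or_ne r 0 with hr | hr
    · subst hr
      rw [hL ψ 0, hddψ]
      simp only [hDqdef]
      simp [hg10]
    · have hrc : (r : ℂ) ≠ 0 := Complex.ofReal_ne_zero.mpr hr
      rw [hL ψ r, hddψ, hdψ, hgψ r]
      field_simp
      ring
  have hDq0 : Dq 0 = 0 := by simp [hDqdef, hg10]
  -- second Hadamard factorization : Dq = r * h
  obtain ⟨h, hh, hhq⟩ := hadamard hDqC hDq0
  set h₁ := deriv h with hh₁def
  set h₂ := deriv h₁ with hh₂def
  have hhd : Differentiable ℝ h := (contDiff_infty_iff_deriv.mp hh).1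
  have hh1 : ContDiff ℝ (⊤ : ℕ∞) h₁ := hderiv_step hh
  have hh1d : Differentiable ℝ h₁ := (contDiff_infty_iff_deriv.mp hh1).1
  have hh2 : ContDiff ℝ (⊤ : ℕ∞) h₂ := hderiv_step hh1
  have hDh : ∀ r, HasDerivAt h (h₁ r) r := fun r => (hhd r).hasDerivAt
  have hDh1 : ∀ r, HasDerivAt h₁ (h₂ r) r := fun r => (hh1d r).hasDerivAt
  have hDqeq : Dq = fun r : ℝ => (r : ℂ) * h r := funext hhq
  set Q : ℝ → ℂ := fun r => 2 * h r + r * h₁ r with hQdef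
  set DQ : ℝ → ℂ := fun r => 3 * h₁ r + r * h₂ r with hDQdef
  have hDQ : ∀ r, HasDerivAt Q (DQ r) r := by
    intro r
    have := ((hDh r).const_mul (2:ℂ)).add ((hOR r).mul (hDh1 r))
    refine this.congr_deriv ?_
    simp only [hDQdef]
    ring
  have hDDq : ∀ r, HasDerivAt Dq (h r + r * h₁ r) r := by
    intro r
    rw [hDqeq]
    have := (hOR r).mul (hDh r)
    refine this.congr_deriv ?_
    ring
  have hdDq : deriv Dq = fun r : ℝ => h r + r * h₁ r := funext fun r => (hDDq r).deriv
  have hDdDq : ∀ r, HasDerivAt (deriv Dq) (2 * h₁ r + r * h₂ r) r := by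
    intro r
    rw [hdDq]
    have := (hDh r).add ((hOR r).mul (hDh1 r))
    refine this.congr_deriv ?_
    ring
  have hddDq : deriv (deriv Dq) = fun r : ℝ => 2 * h₁ r + r * h₂ r :=
    funext fun r => (hDdDq r).deriv
  have hLLeq : ∀ r : ℝ, r ≠ 0 → L (L ψ) r = DQ r := by
    intro r hr
    have hrc : (r : ℂ) ≠ 0 := Complex.ofReal_ne_zero.mpr hr
    rw [hL (L ψ) r, hLψeq, hddDq, hdDq, hhq r]
    simp only [hDQdef]
    field_simp
    ring
  -- boundary values at 1
  have hgval1 : g 1 = 0 := by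
    have := hgψ 1
    rw [h1] at this
    simpa using this.symm
  have hq1 : q 1 = g₁ 1 := by simp [hqdef, hgval1]
  have hdψ1 : deriv ψ 1 = g₁ 1 := by rw [hdψ]; simp [hgval1]
  have hDq1 : Dq 1 = -(α:ℂ) * g₁ 1 := by rw [← hLψeq, hL1, hdψ1]
  -- u = r ψ
  set u : ℝ → ℂ := fun s : ℝ => (s : ℂ) * ψ s with hudef
  have hDu : ∀ r : ℝ, HasDerivAt u ((r : ℂ) * q r) r := by
    intro r
    have := (hOR r).mul (hDψ r)
    refine this.congr_deriv ?_
    simp only [hqdef]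
    rw [hgψ r]
    ring
  have hdu : deriv u = fun r : ℝ => (r : ℂ) * q r := funext fun r => (hDu r).deriv
  have hu0 : u 0 = 0 := by simp [hudef]
  have hu1 : u 1 = 0 := by simp [hudef, h1]
  set c := starRingEnd ℂ with hcdef
  -- continuity facts
  have hgc : Continuous g := hg.continuous
  have hg1c : Continuous g₁ := hg1.continuous
  have hqc : Continuous q := hqC.continuous
  have hDqc : Continuous Dq := hDqC.continuous
  have hQc : Continuous Q :=
    (continuous_const.mul hh.continuous).add (Complex.continuous_ofReal.mul hh1.continuous)
  have hDQc : Continuous DQ :=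
    (continuous_const.mul hh1.continuous).add (Complex.continuous_ofReal.mul hh2.continuous)
  have hψc : Continuous ψ := hψ.continuous
  have huc : Continuous u := Complex.continuous_ofReal.mul hψc
  have hstarc : Continuous (fun z : ℂ => c z) := continuous_star
  -- derivatives of conjugates
  have hDcu : ∀ r : ℝ, HasDerivAt (fun s => c (u s)) (c ((r : ℂ) * q r)) r :=
    fun r => (hDu r).star
  have hDcq : ∀ r : ℝ, HasDerivAt (fun s => c (q s)) (c (Dq r)) r :=
    fun r => (hDq r).star
  -- the mul_conj lemma
  have hnorm : ∀ z : ℂ, c z * z = ((‖z‖ ^ 2 : ℝ) : ℂ) := by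
    intro z
    rw [hcdef, mul_comm, Complex.mul_conj, Complex.normSq_eq_norm_sq]
  have hcu : ∀ x : ℝ, c (u x) = (x : ℂ) * c (ψ x) := by
    intro x
    simp [hudef, hcdef, map_mul, Complex.conj_ofReal]
  -- rW = r · Dq and its derivative
  set rW : ℝ → ℂ := fun r => (r : ℂ) * Dq r with hrWdef
  have hDrW : ∀ r : ℝ, HasDerivAt rW ((r : ℂ) * Q r) r := by
    intro r
    have := (hOR r).mul (hDDq r)
    refine this.congr_deriv ?_
    simp only [hQdef]
    rw [hhq r]
    ring
  have hrWc : Continuous rW := Complex.continuous_ofReal.mul hDqc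
  -- IBP 1
  have IBP1 : (∫ x in (0:ℝ)..1, c (u x) * Dq x)
      = -∫ x in (0:ℝ)..1, c ((x : ℂ) * q x) * q x := by
    have := intervalIntegral.integral_mul_deriv_eq_deriv_mul (a := (0:ℝ)) (b := (1:ℝ))
      (u := fun x => c (u x)) (v := q)
      (u' := fun x => c ((x : ℂ) * q x)) (v' := Dq)
      (fun x _ => hDcu x) (fun x _ => hDq x)
      (((hstarc.comp (Complex.continuous_ofReal.mul hqc)).intervalIntegrable _ _))
      ((hDqc.intervalIntegrable _ _))
    simpa [hu0, hu1] using this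
  -- IBP 2
  have IBP2 : (∫ x in (0:ℝ)..1, c (u x) * DQ x)
      = -∫ x in (0:ℝ)..1, c ((x : ℂ) * q x) * Q x := by
    have := intervalIntegral.integral_mul_deriv_eq_deriv_mul (a := (0:ℝ)) (b := (1:ℝ))
      (u := fun x => c (u x)) (v := Q)
      (u' := fun x => c ((x : ℂ) * q x)) (v' := DQ)
      (fun x _ => hDcu x) (fun x _ => hDQ x)
      (((hstarc.comp (Complex.continuous_ofReal.mul hqc)).intervalIntegrable _ _))
      ((hDQc.intervalIntegrable _ _))
    simpa [hu0, hu1] using this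
  -- IBP 3
  have IBP3 : (∫ x in (0:ℝ)..1, c (q x) * ((x : ℂ) * Q x))
      = c (q 1) * rW 1 - ∫ x in (0:ℝ)..1, c (Dq x) * rW x := by
    have := intervalIntegral.integral_mul_deriv_eq_deriv_mul (a := (0:ℝ)) (b := (1:ℝ))
      (u := fun x => c (q x)) (v := rW)
      (u' := fun x => c (Dq x)) (v' := fun x => (x : ℂ) * Q x)
      (fun x _ => hDcq x) (fun x _ => hDrW x)
      (((hstarc.comp hDqc).intervalIntegrable _ _))
      ((Complex.continuous_ofReal.mul hQc).intervalIntegrable _ _)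
    have hrW0 : rW 0 = 0 := by simp [hrWdef]
    simpa [hrW0] using this
  -- convert complex integrals to real ones
  have hE1 : (∫ x in (0:ℝ)..1, c (Dq x) * rW x)
      = ((∫ x in (0:ℝ)..1, ‖Dq x‖ ^ 2 * x : ℝ) : ℂ) := by
    rw [← intervalIntegral.integral_ofReal]
    apply intervalIntegral.integral_congr
    intro x _
    simp only [hrWdef]
    calc c (Dq x) * ((x:ℂ) * Dq x) = (c (Dq x) * Dq x) * (x:ℂ) := by ring
    _ = ((‖Dq x‖ ^ 2 : ℝ) : ℂ) * (x:ℂ) := by rw [hnorm]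
    _ = _ := by push_cast; ring
  have hE2 : (∫ x in (0:ℝ)..1, c ((x : ℂ) * q x) * q x)
      = ((∫ x in (0:ℝ)..1, ‖q x‖ ^ 2 * x : ℝ) : ℂ) := by
    rw [← intervalIntegral.integral_ofReal]
    apply intervalIntegral.integral_congr
    intro x _
    calc c ((x:ℂ) * q x) * q x = (c (q x) * q x) * (x:ℂ) := by
          simp only [map_mul, hcdef, Complex.conj_ofReal]; ring
    _ = ((‖q x‖ ^ 2 : ℝ) : ℂ) * (x:ℂ) := by rw [hnorm]
    _ = _ := by push_cast; ring
  have hE3 : (∫ x in (0:ℝ)..1, c ((x : ℂ) * q x) * Q x)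
      = ∫ x in (0:ℝ)..1, c (q x) * ((x : ℂ) * Q x) := by
    apply intervalIntegral.integral_congr
    intro x _
    simp only [map_mul, hcdef, Complex.conj_ofReal]
    ring
  -- boundary term
  have hbdry : c (q 1) * rW 1 = -(α : ℂ) * ((‖g₁ 1‖ ^ 2 : ℝ) : ℂ) := by
    simp only [hrWdef, hq1, hDq1]
    calc c (g₁ 1) * ((1:ℝ) * (-(α:ℂ) * g₁ 1)) = -(α:ℂ) * (c (g₁ 1) * g₁ 1) := by
          push_cast; ring
    _ = -(α:ℂ) * ((‖g₁ 1‖ ^ 2 : ℝ) : ℂ) := by rw [hnorm]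
  have hIA : (∫ x in (0:ℝ)..1, c (u x) * DQ x)
      = (α : ℂ) * ((‖g₁ 1‖ ^ 2 : ℝ) : ℂ) + ((∫ x in (0:ℝ)..1, ‖Dq x‖ ^ 2 * x : ℝ) : ℂ) := by
    rw [IBP2, hE3, IBP3, hbdry, hE1]
    ring
  have hIB : (∫ x in (0:ℝ)..1, c (u x) * Dq x)
      = -((∫ x in (0:ℝ)..1, ‖q x‖ ^ 2 * x : ℝ) : ℂ) := by
    rw [IBP1, hE2]
  -- split the LHS
  have hae0 : ∀ᵐ x : ℝ ∂volume, x ≠ 0 := by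
    have hset : {x : ℝ | ¬ x ≠ 0} = {0} := by ext y; simp
    rw [MeasureTheory.ae_iff, hset]
    exact measure_singleton 0
  have hLHS : (∫ r in (0:ℝ)..1,
        (L (L ψ) r - 2 * (ξ : ℂ) ^ 2 * L ψ r + (ξ : ℂ) ^ 4 * ψ r) * c (ψ r) * (r : ℂ))
      = (∫ x in (0:ℝ)..1, c (u x) * DQ x)
        - 2 * (ξ : ℂ) ^ 2 * (∫ x in (0:ℝ)..1, c (u x) * Dq x)
        + (ξ : ℂ) ^ 4 * ((∫ x in (0:ℝ)..1, ‖ψ x‖ ^ 2 * x : ℝ) : ℂ) := by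
    have hcong : (∫ r in (0:ℝ)..1,
          (L (L ψ) r - 2 * (ξ : ℂ) ^ 2 * L ψ r + (ξ : ℂ) ^ 4 * ψ r) * c (ψ r) * (r : ℂ))
        = ∫ r in (0:ℝ)..1, (c (u r) * DQ r - 2 * (ξ : ℂ) ^ 2 * (c (u r) * Dq r)
            + (ξ : ℂ) ^ 4 * ((‖ψ r‖ ^ 2 * r : ℝ) : ℂ)) := by
      apply intervalIntegral.integral_congr_ae
      filter_upwards [hae0] with x hx _
      have hψn : ψ x * c (ψ x) * (x : ℂ) = ((‖ψ x‖ ^ 2 * x : ℝ) : ℂ) := by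
        rw [mul_comm (ψ x) (c (ψ x)), hnorm]
        push_cast; ring
      rw [hLLeq x hx, hLψeq, hcu x, ← hψn]
      ring
    rw [hcong]
    have hi1 : IntervalIntegrable (fun x => c (u x) * DQ x) volume 0 1 :=
      ((hstarc.comp huc).mul hDQc).intervalIntegrable _ _
    have hi2 : IntervalIntegrable (fun x => 2 * (ξ:ℂ)^2 * (c (u x) * Dq x)) volume 0 1 :=
      (continuous_const.mul ((hstarc.comp huc).mul hDqc)).intervalIntegrable _ _
    have hi3 : IntervalIntegrable (fun x : ℝ => (ξ:ℂ)^4 * ((‖ψ x‖ ^ 2 * x : ℝ) : ℂ)) volume 0 1 :=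
      (continuous_const.mul (Complex.continuous_ofReal.comp
        ((hψc.norm.pow 2).mul continuous_id))).intervalIntegrable _ _
    rw [intervalIntegral.integral_add (hi1.sub hi2) hi3,
      intervalIntegral.integral_sub hi1 hi2,
      intervalIntegral.integral_const_mul, intervalIntegral.integral_const_mul,
      intervalIntegral.integral_ofReal]
  -- RHS conversions
  have hderiv_u1 : deriv u 1 = g₁ 1 := by
    rw [hdu]
    simp only
    rw [← hq1]
    push_cast
    ring
  have hRHS3 : (∫ r in (0:ℝ)..1, ‖deriv u r‖ ^ 2 / r : ℝ)
      = ∫ r in (0:ℝ)..1, ‖q r‖ ^ 2 * r := by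
    apply intervalIntegral.integral_congr_ae
    rw [Set.uIoc_of_le (zero_le_one' ℝ)]
    filter_upwards with x hx
    have hx0 : 0 < x := hx.1
    rw [hdu]
    simp only
    rw [norm_mul, Complex.norm_real, Real.norm_eq_abs, abs_of_pos hx0, mul_pow]
    field_simp
  rw [hLHS, hIA, hIB, hLψeq, hderiv_u1, hRHS3]
  push_cast
  ring
end

section
/- Let α > 0, ξ ∈ ℝ, and let v : [0,1] → ℂ be a C² function with v(0) = 0 and v'(1) = (1 − α) v(1), satisfying iξ Ū(r) v − (L − ξ²) v = F on (0,1), where Ū ≥ 0 and L g = g'' + g'/r − g/r². Then the real-part energy identity holds: ∫₀¹ |(rv)'|² (1/r) dr + (α − 2)|v(1)|² + ξ² ∫₀¹ |v|² r dr = Re ∫₀¹ F conj(v) r dr, and the imaginary-part identity: ξ ∫₀¹ Ū(r)|v|² r dr = Im ∫₀¹ F conj(v) r dr. -/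
/-!
Multiplying the equation by `r · conj v` gives, pointwise on `(0,1)`,
`F conj(v) r + G' - ξ² |v|² r = |(r v)'|² / r + i ξ U |v|² r` with `G = (r v)' conj(v)`.
The left side is continuous on `[0,1]`, so it can be integrated term by term, with
`G 0 = 0` and `G 1 = (2 - α) |v 1|²`; the right side is never split, and its real and imaginary
parts are compared with those of the left side on the open interval only. This is why neither
`|(r v)'|² / r` nor `U |v|² r` needs to be known integrable beforehand.
-/

open MeasureTheory Complex ComplexConjugate

lemma integral_eq_re_and_im_of_eqOn_Ioo {a b : ℝ} {Φ : ℝ → ℂ} {x y : ℝ → ℝ} (hab : a ≤ b)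
    (hΦ : IntervalIntegrable Φ volume a b) (h : Set.EqOn Φ (fun r => x r + I * y r) (Set.Ioo a b)) :
    ∫ r in a..b, x r = (∫ r in a..b, Φ r).re ∧ ∫ r in a..b, y r = (∫ r in a..b, Φ r).im := by
  refine ⟨?_, ?_⟩
  · refine (intervalIntegral.integral_congr_Ioo_of_le hab fun r hr => ?_).trans
      (intervalIntegral.intervalIntegral_re hΦ)
    simp [h hr]
  · refine (intervalIntegral.integral_congr_Ioo_of_le hab fun r hr => ?_).trans
      (intervalIntegral.intervalIntegral_im hΦ)
    simp [h hr]

section RadialFlux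

variable {v : ℝ → ℂ}

/-- The boundary term `(r v)' · conj v` produced by integrating `r · v'' · conj v` by parts. -/
noncomputable def radialFlux (v : ℝ → ℂ) (r : ℝ) : ℂ :=
  (v r + r * deriv v r) * conj (v r)

noncomputable def radialFluxDeriv (v : ℝ → ℂ) (r : ℝ) : ℂ :=
  (2 * deriv v r + r * deriv (deriv v) r) * conj (v r) + (v r + r * deriv v r) * conj (deriv v r)

lemma hasDerivAt_radialFlux (hv : ContDiff ℝ 2 v) (r : ℝ) :
    HasDerivAt (radialFlux v) (radialFluxDeriv v r) r := by
  have hv₁ : HasDerivAt v (deriv v r) r := (hv.differentiable two_ne_zero r).hasDerivAt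
  have hv₂ : HasDerivAt (deriv v) (deriv (deriv v) r) r :=
    ((hv.iterate_deriv' 1 1).differentiable one_ne_zero r).hasDerivAt
  have hs : HasDerivAt (fun s : ℝ => (s : ℂ)) 1 r := by
    simpa using (hasDerivAt_id r).ofReal_comp
  refine ((hv₁.add (hs.mul hv₂)).mul hv₁.star).congr_deriv ?_
  simp only [radialFluxDeriv, Pi.add_apply, Pi.mul_apply, one_mul, starRingEnd_apply]
  ring

lemma continuous_radialFluxDeriv (hv : ContDiff ℝ 2 v) : Continuous (radialFluxDeriv v) := by
  have hv' : ContDiff ℝ 1 (deriv v) := hv.iterate_deriv' 1 1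
  have := hv.continuous
  have := hv'.continuous
  have := hv'.continuous_deriv le_rfl
  unfold radialFluxDeriv
  fun_prop

lemma integral_radialFluxDeriv (hv : ContDiff ℝ 2 v) (a b : ℝ) :
    ∫ r in a..b, radialFluxDeriv v r = radialFlux v b - radialFlux v a :=
  intervalIntegral.integral_eq_sub_of_hasDerivAt (fun r _ => hasDerivAt_radialFlux hv r)
    ((continuous_radialFluxDeriv hv).intervalIntegrable a b)

lemma radialFlux_zero (hv0 : v 0 = 0) : radialFlux v 0 = 0 := by
  simp [radialFlux, hv0]

lemma radialFlux_one_of_robin {α : ℝ} (hv1 : deriv v 1 = (1 - α) * v 1) :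
    radialFlux v 1 = ((2 - α) * ‖v 1‖ ^ 2 : ℝ) := by
  rw [radialFlux, hv1]
  push_cast
  rw [← mul_conj']
  ring

lemma deriv_ofReal_mul (hv : Differentiable ℝ v) (r : ℝ) :
    deriv (fun s : ℝ => (s : ℂ) * v s) r = v r + r * deriv v r := by
  have := (hasDerivAt_id r).ofReal_comp.mul (hv r).hasDerivAt
  simp only [id, ofReal_one, one_mul] at this
  exact this.deriv

lemma energy_density_identity {ξ U r : ℝ} (hr : r ≠ 0) {F : ℂ}
    (h : I * ξ * U * v r - (deriv (deriv v) r + deriv v r / r - v r / r ^ 2 - ξ ^ 2 * v r) = F) :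
    F * conj (v r) * r + radialFluxDeriv v r - ((ξ ^ 2 * (‖v r‖ ^ 2 * r) : ℝ) : ℂ)
      = ((‖v r + r * deriv v r‖ ^ 2 / r : ℝ) : ℂ) + I * ((ξ * (U * ‖v r‖ ^ 2 * r) : ℝ) : ℂ) := by
  subst h
  have hr' : (r : ℂ) ≠ 0 := ofReal_ne_zero.mpr hr
  push_cast
  simp only [radialFluxDeriv, ← mul_conj', map_add, map_mul, conj_ofReal]
  field_simp
  ring

lemma integral_energy_density {α ξ : ℝ} {F : ℝ → ℂ} (hv : ContDiff ℝ 2 v) (hF : Continuous F)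
    (hv0 : v 0 = 0) (hv1 : deriv v 1 = (1 - α) * v 1) :
    ∫ r in (0:ℝ)..1, (F r * conj (v r) * r + radialFluxDeriv v r - ((ξ ^ 2 * (‖v r‖ ^ 2 * r) : ℝ) : ℂ))
      = (∫ r in (0:ℝ)..1, F r * conj (v r) * r)
        + ((2 - α) * ‖v 1‖ ^ 2 - ξ ^ 2 * ∫ r in (0:ℝ)..1, ‖v r‖ ^ 2 * r : ℝ) := by
  have := hv.continuous
  have hsource : Continuous fun r : ℝ => F r * conj (v r) * r := by fun_prop
  have hmass : Continuous fun r : ℝ => ((ξ ^ 2 * (‖v r‖ ^ 2 * r) : ℝ) : ℂ) := by fun_prop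
  have hflux := continuous_radialFluxDeriv hv
  have hsum : Continuous fun r => F r * conj (v r) * r + radialFluxDeriv v r := hsource.add hflux
  rw [intervalIntegral.integral_sub (hsum.intervalIntegrable 0 1)
      (hmass.intervalIntegrable 0 1), intervalIntegral.integral_add (hsource.intervalIntegrable 0 1)
      (hflux.intervalIntegrable 0 1), integral_radialFluxDeriv hv, radialFlux_zero hv0,
    radialFlux_one_of_robin hv1, intervalIntegral.integral_ofReal, intervalIntegral.integral_const_mul]
  push_cast
  ring

end RadialFlux

theorem stmt16_general (α ξ : ℝ) (U : ℝ → ℝ)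
    (v F : ℝ → ℂ) (hv : ContDiff ℝ 2 v) (hF : Continuous F)
    (hv0 : v 0 = 0) (hv1 : deriv v 1 = (1 - (α : ℂ)) * v 1)
    (heq : ∀ r ∈ Set.Ioo (0:ℝ) 1,
      Complex.I * (ξ : ℂ) * ((U r : ℝ) : ℂ) * v r
          - (deriv (deriv v) r + deriv v r / (r : ℂ) - v r / (r : ℂ) ^ 2
              - (ξ : ℂ) ^ 2 * v r) = F r) :
    ((∫ r in (0:ℝ)..1, ‖deriv (fun s : ℝ => (s : ℂ) * v s) r‖ ^ 2 / r)
        + (α - 2) * ‖v 1‖ ^ 2 + ξ ^ 2 * ∫ r in (0:ℝ)..1, ‖v r‖ ^ 2 * r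
      = (∫ r in (0:ℝ)..1, F r * (starRingEnd ℂ) (v r) * (r : ℂ)).re)
    ∧ ξ * ∫ r in (0:ℝ)..1, U r * ‖v r‖ ^ 2 * r
        = (∫ r in (0:ℝ)..1, F r * (starRingEnd ℂ) (v r) * (r : ℂ)).im := by
  have hcont : Continuous fun r : ℝ =>
      F r * conj (v r) * r + radialFluxDeriv v r - ((ξ ^ 2 * (‖v r‖ ^ 2 * r) : ℝ) : ℂ) := by
    have := hv.continuous
    have := continuous_radialFluxDeriv hv
    fun_prop
  obtain ⟨hre, him⟩ := integral_eq_re_and_im_of_eqOn_Ioo zero_le_one (hcont.intervalIntegrable 0 1)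
    (x := fun r => ‖deriv (fun s : ℝ => (s : ℂ) * v s) r‖ ^ 2 / r)
    (y := fun r => ξ * (U r * ‖v r‖ ^ 2 * r)) fun r hr => by
      simp only [deriv_ofReal_mul (hv.differentiable two_ne_zero)]
      exact energy_density_identity hr.1.ne' (heq r hr)
  rw [integral_energy_density hv hF hv0 hv1] at hre him
  refine ⟨?_, ?_⟩
  · simp only [hre, add_re, ofReal_re]
    ring
  · simp only [← intervalIntegral.integral_const_mul, him, add_im, ofReal_im, add_zero]

/-- Energy identities for the swirl equation: if `v` is C² with `v(0) = 0`,
`v'(1) = (1−α) v(1)` and `iξ Ū v − (L − ξ²)v = F` on `(0,1)` with `Ū ≥ 0`, then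
`∫₀¹ |(rv)'|²/r dr + (α−2)|v(1)|² + ξ² ∫₀¹ |v|² r dr = Re ∫₀¹ F conj(v) r dr`
and `ξ ∫₀¹ Ū |v|² r dr = Im ∫₀¹ F conj(v) r dr`. -/
theorem stmt16 (α ξ : ℝ) (hα : 0 < α) (U : ℝ → ℝ) (hU : ∀ r : ℝ, 0 ≤ U r)
    (v F : ℝ → ℂ) (hv : ContDiff ℝ 2 v) (hF : Continuous F)
    (hv0 : v 0 = 0) (hv1 : deriv v 1 = (1 - (α : ℂ)) * v 1)
    (heq : ∀ r ∈ Set.Ioo (0:ℝ) 1,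
      Complex.I * (ξ : ℂ) * ((U r : ℝ) : ℂ) * v r
          - (deriv (deriv v) r + deriv v r / (r : ℂ) - v r / (r : ℂ) ^ 2
              - (ξ : ℂ) ^ 2 * v r) = F r) :
    ((∫ r in (0:ℝ)..1, ‖deriv (fun s : ℝ => (s : ℂ) * v s) r‖ ^ 2 / r)
        + (α - 2) * ‖v 1‖ ^ 2 + ξ ^ 2 * ∫ r in (0:ℝ)..1, ‖v r‖ ^ 2 * r
      = (∫ r in (0:ℝ)..1, F r * (starRingEnd ℂ) (v r) * (r : ℂ)).re)
    ∧ ξ * ∫ r in (0:ℝ)..1, U r * ‖v r‖ ^ 2 * r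
        = (∫ r in (0:ℝ)..1, F r * (starRingEnd ℂ) (v r) * (r : ℂ)).im :=
  stmt16_general α ξ U v F hv hF hv0 hv1 heq
end
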